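/- arXiv:1703.04387 — 7 statements merged into one kernel-verified Lean document; each statement's English description precedes it below -/
import Mathlib

section
/- Let (A,F) be a measurable space and X1, X2 be A-valued exchangeable random variables (i.e., (X1,X2) and (X2,X1) have the same joint distribution). Suppose α ≥ 0 is such that for every measurable f : A → ℝ with f(X1) of finite variance, |corr(f(X1), f(X2))| ≤ α. Then for any measurable f1, f2 : A → ℝ with f1(X1) and f2(X2) of finite nonzero variance, |corr(f1(X1), f2(X2))| ≤ α. -/
/-!
Exchangeability makes `B f g = cov (f ∘ X₁) (g ∘ X₂)` a symmetric bilinear form in `f, g`, and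
the hypothesis says `|B f f| ≤ α Var (f ∘ X₁)`. Polarization,
`4 B f g = B (f + g) (f + g) - B (f - g) (f - g)`, gives
`2 |B f g| ≤ α (Var (f ∘ X₁) + Var (g ∘ X₁))`; since `X₁` and `X₂` have the same law,
rescaling `f₁, f₂` to unit variance turns this into the bound on the correlation.
-/

open MeasureTheory

/-- Covariance of two real random variables. -/
noncomputable def cov {Ω : Type*} [MeasurableSpace Ω] (μ : Measure Ω) (U V : Ω → ℝ) : ℝ :=
  ∫ ω, (U ω - ∫ x, U x ∂μ) * (V ω - ∫ x, V x ∂μ) ∂μ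

/-- Pearson correlation coefficient of two real random variables. -/
noncomputable def corr {Ω : Type*} [MeasurableSpace Ω] (μ : Measure Ω) (U V : Ω → ℝ) : ℝ :=
  cov μ U V / (Real.sqrt (cov μ U U) * Real.sqrt (cov μ V V))

namespace ProbabilityTheory

section Correlation

variable {Ω : Type*} {mΩ : MeasurableSpace Ω} {μ : Measure Ω} {U V : Ω → ℝ}

theorem cov_eq_covariance (μ : Measure Ω) (U V : Ω → ℝ) : cov μ U V = cov[U, V; μ] := rfl

theorem corr_eq_covariance_div (hU : AEMeasurable U μ) (hV : AEMeasurable V μ) :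
    corr μ U V = cov[U, V; μ] / (√Var[U; μ] * √Var[V; μ]) := by
  rw [corr, cov_eq_covariance, cov_eq_covariance, cov_eq_covariance, covariance_self hU,
    covariance_self hV]

theorem covariance_eq_zero_of_variance_eq_zero [IsFiniteMeasure μ] (hU : MemLp U 2 μ)
    (h : Var[U; μ] = 0) : cov[U, V; μ] = 0 := by
  refine integral_eq_zero_of_ae ?_
  filter_upwards [ae_eq_integral_of_variance_eq_zero hU h] with ω hω
  simp [hω]

theorem abs_covariance_le_of_abs_corr_le [IsFiniteMeasure μ] (hU : MemLp U 2 μ)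
    (hV : AEMeasurable V μ) (hvar : Var[U; μ] = Var[V; μ]) {α : ℝ} (h : |corr μ U V| ≤ α) :
    |cov[U, V; μ]| ≤ α * Var[U; μ] := by
  rw [corr_eq_covariance_div hU.aemeasurable hV, ← hvar,
    Real.mul_self_sqrt (variance_nonneg U μ), abs_div, abs_of_nonneg (variance_nonneg U μ)] at h
  -- When `Var U = 0` the correlation is the junk value `0`, but then `U` is a.e. constant.
  rcases (variance_nonneg U μ).eq_or_lt with hzero | hpos
  · simp [covariance_eq_zero_of_variance_eq_zero hU hzero.symm, ← hzero]
  · exact (div_le_iff₀ hpos).mp h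

end Correlation

section Exchangeable

variable {Ω A : Type*} {mΩ : MeasurableSpace Ω} [MeasurableSpace A] {μ : Measure Ω}
  {X₁ X₂ : Ω → A} {f g : A → ℝ}

theorem IdentDistrib.comp_of_swap
    (h : IdentDistrib (fun ω ↦ (X₁ ω, X₂ ω)) (fun ω ↦ (X₂ ω, X₁ ω)) μ μ) (hf : Measurable f) :
    IdentDistrib (f ∘ X₁) (f ∘ X₂) μ μ :=
  h.comp (hf.comp measurable_fst)

theorem IdentDistrib.covariance_comp_comm_of_swap
    (h : IdentDistrib (fun ω ↦ (X₁ ω, X₂ ω)) (fun ω ↦ (X₂ ω, X₁ ω)) μ μ) (hf : Measurable f)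
    (hg : Measurable g) :
    cov[f ∘ X₁, g ∘ X₂; μ] = cov[g ∘ X₁, f ∘ X₂; μ] := by
  have hfg {ν : Measure (A × A)} : AEStronglyMeasurable (f ∘ Prod.fst) ν ∧
      AEStronglyMeasurable (g ∘ Prod.snd) ν :=
    ⟨(hf.comp measurable_fst).aestronglyMeasurable, (hg.comp measurable_snd).aestronglyMeasurable⟩
  have h₁₂ := covariance_map hfg.1 hfg.2 h.aemeasurable_fst
  rw [h.map_eq, covariance_map hfg.1 hfg.2 h.aemeasurable_snd] at h₁₂
  exact h₁₂.symm.trans (covariance_comm _ _)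

theorem IdentDistrib.abs_covariance_comp_le_of_swap [IsFiniteMeasure μ]
    (h : IdentDistrib (fun ω ↦ (X₁ ω, X₂ ω)) (fun ω ↦ (X₂ ω, X₁ ω)) μ μ) {α : ℝ}
    (hdiag : ∀ f : A → ℝ, Measurable f → MemLp (f ∘ X₁) 2 μ →
      |cov[f ∘ X₁, f ∘ X₂; μ]| ≤ α * Var[f ∘ X₁; μ])
    (hf : Measurable f) (hg : Measurable g) (hf₁ : MemLp (f ∘ X₁) 2 μ)
    (hg₁ : MemLp (g ∘ X₁) 2 μ) :
    2 * |cov[f ∘ X₁, g ∘ X₂; μ]| ≤ α * (Var[f ∘ X₁; μ] + Var[g ∘ X₁; μ]) := by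
  have hf₂ := (h.comp_of_swap hf).memLp_iff.mp hf₁
  have hg₂ := (h.comp_of_swap hg).memLp_iff.mp hg₁
  have hcomp (s : ℝ) (X : Ω → A) : (f + s • g) ∘ X = f ∘ X + s • (g ∘ X) := rfl
  have hcross (s : ℝ) : cov[(f + s • g) ∘ X₁, (f + s • g) ∘ X₂; μ] = cov[f ∘ X₁, f ∘ X₂; μ] +
      2 * s * cov[f ∘ X₁, g ∘ X₂; μ] + s ^ 2 * cov[g ∘ X₁, g ∘ X₂; μ] := by
    rw [hcomp, hcomp, covariance_add_left hf₁ (hg₁.const_smul s) (hf₂.add (hg₂.const_smul s)),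
      covariance_add_right hf₁ hf₂ (hg₂.const_smul s),
      covariance_add_right (hg₁.const_smul s) hf₂ (hg₂.const_smul s), covariance_smul_left,
      covariance_smul_left, covariance_smul_right, covariance_smul_right,
      h.covariance_comp_comm_of_swap hg hf]
    ring
  have hvar (s : ℝ) : Var[(f + s • g) ∘ X₁; μ] =
      Var[f ∘ X₁; μ] + 2 * s * cov[f ∘ X₁, g ∘ X₁; μ] + s ^ 2 * Var[g ∘ X₁; μ] := by
    rw [hcomp, variance_add hf₁ (hg₁.const_smul s), covariance_smul_right, variance_smul]
    ring
  have hdiag_s (s : ℝ) :=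
    hdiag (f + s • g) (hf.add (hg.const_smul s)) (hcomp s X₁ ▸ hf₁.add (hg₁.const_smul s))
  obtain ⟨hplus₁, hplus₂⟩ := abs_le.mp (hdiag_s 1)
  obtain ⟨hminus₁, hminus₂⟩ := abs_le.mp (hdiag_s (-1))
  simp only [hcross, hvar] at hplus₁ hplus₂ hminus₁ hminus₂
  rcases abs_cases cov[f ∘ X₁, g ∘ X₂; μ] with ⟨habs, -⟩ | ⟨habs, -⟩ <;> rw [habs] <;> linarith

theorem IdentDistrib.abs_corr_comp_le_of_swap [IsFiniteMeasure μ]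
    (h : IdentDistrib (fun ω ↦ (X₁ ω, X₂ ω)) (fun ω ↦ (X₂ ω, X₁ ω)) μ μ) {α : ℝ}
    (hdiag : ∀ f : A → ℝ, Measurable f → MemLp (f ∘ X₁) 2 μ →
      |cov[f ∘ X₁, f ∘ X₂; μ]| ≤ α * Var[f ∘ X₁; μ])
    (hf : Measurable f) (hg : Measurable g) (hf₁ : MemLp (f ∘ X₁) 2 μ)
    (hg₂ : MemLp (g ∘ X₂) 2 μ)
    (hvf : Var[f ∘ X₁; μ] ≠ 0) (hvg : Var[g ∘ X₂; μ] ≠ 0) :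
    |corr μ (f ∘ X₁) (g ∘ X₂)| ≤ α := by
  have hg₁ := (h.comp_of_swap hg).memLp_iff.mpr hg₂
  set s := √Var[f ∘ X₁; μ] with hs
  set t := √Var[g ∘ X₂; μ] with ht
  have hs_pos : 0 < s := Real.sqrt_pos.mpr ((variance_nonneg _ _).lt_of_ne' hvf)
  have ht_pos : 0 < t := Real.sqrt_pos.mpr ((variance_nonneg _ _).lt_of_ne' hvg)
  have hs_sq : Var[f ∘ X₁; μ] = s ^ 2 := (Real.sq_sqrt (variance_nonneg _ _)).symm
  have ht_sq : Var[g ∘ X₁; μ] = t ^ 2 := by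
    rw [(h.comp_of_swap hg).variance_eq, Real.sq_sqrt (variance_nonneg _ _)]
  have hnormed := h.abs_covariance_comp_le_of_swap hdiag (hf.const_smul s⁻¹) (hg.const_smul t⁻¹)
    (hf₁.const_smul s⁻¹) (hg₁.const_smul t⁻¹)
  simp only [Pi.smul_comp, covariance_smul_left, covariance_smul_right, variance_smul, hs_sq,
    ht_sq, abs_mul, abs_inv, abs_of_pos hs_pos, abs_of_pos ht_pos] at hnormed
  rw [corr_eq_covariance_div hf₁.aemeasurable hg₂.aemeasurable, ← hs, ← ht, abs_div,
    abs_of_pos (mul_pos hs_pos ht_pos), div_le_iff₀ (mul_pos hs_pos ht_pos)]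
  field_simp at hnormed
  linarith

end Exchangeable

end ProbabilityTheory

open ProbabilityTheory

theorem corr_two_functions_bound_general {Ω A : Type*} [MeasurableSpace Ω] [MeasurableSpace A]
    (μ : Measure Ω) [IsProbabilityMeasure μ]
    (X1 X2 : Ω → A) (hX1 : Measurable X1) (hX2 : Measurable X2)
    (hexch : μ.map (fun ω => (X1 ω, X2 ω)) = μ.map (fun ω => (X2 ω, X1 ω)))
    (α : ℝ)
    (hbound : ∀ f : A → ℝ, Measurable f → MemLp (f ∘ X1) 2 μ →
      |corr μ (f ∘ X1) (f ∘ X2)| ≤ α)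
    (f1 f2 : A → ℝ) (hf1 : Measurable f1) (hf2 : Measurable f2)
    (hm1 : MemLp (f1 ∘ X1) 2 μ) (hm2 : MemLp (f2 ∘ X2) 2 μ)
    (hv1 : cov μ (f1 ∘ X1) (f1 ∘ X1) ≠ 0) (hv2 : cov μ (f2 ∘ X2) (f2 ∘ X2) ≠ 0) :
    |corr μ (f1 ∘ X1) (f2 ∘ X2)| ≤ α := by
  have hswap : IdentDistrib (fun ω ↦ (X1 ω, X2 ω)) (fun ω ↦ (X2 ω, X1 ω)) μ μ :=
    ⟨(hX1.prodMk hX2).aemeasurable, (hX2.prodMk hX1).aemeasurable, hexch⟩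
  rw [cov_eq_covariance, covariance_self hm1.aemeasurable] at hv1
  rw [cov_eq_covariance, covariance_self hm2.aemeasurable] at hv2
  refine hswap.abs_corr_comp_le_of_swap (fun f hf hf₁ ↦ ?_) hf1 hf2 hm1 hm2 hv1 hv2
  exact abs_covariance_le_of_abs_corr_le hf₁ (hf.comp hX2).aemeasurable
    (hswap.comp_of_swap hf).variance_eq (hbound f hf hf₁)

/-- If `X1, X2` are exchangeable and every single measurable function `f` with `f(X1)` of
finite variance satisfies `|corr(f(X1), f(X2))| ≤ α`, then the same bound holds for two
different functions `f1, f2` (with finite nonzero variances). -/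
theorem corr_two_functions_bound {Ω A : Type*} [MeasurableSpace Ω] [MeasurableSpace A]
    (μ : Measure Ω) [IsProbabilityMeasure μ]
    (X1 X2 : Ω → A) (hX1 : Measurable X1) (hX2 : Measurable X2)
    (hexch : μ.map (fun ω => (X1 ω, X2 ω)) = μ.map (fun ω => (X2 ω, X1 ω)))
    (α : ℝ) (hα : 0 ≤ α)
    (hbound : ∀ f : A → ℝ, Measurable f → MemLp (f ∘ X1) 2 μ →
      |corr μ (f ∘ X1) (f ∘ X2)| ≤ α)
    (f1 f2 : A → ℝ) (hf1 : Measurable f1) (hf2 : Measurable f2)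
    (hm1 : MemLp (f1 ∘ X1) 2 μ) (hm2 : MemLp (f2 ∘ X2) 2 μ)
    (hv1 : cov μ (f1 ∘ X1) (f1 ∘ X1) ≠ 0) (hv2 : cov μ (f2 ∘ X2) (f2 ∘ X2) ≠ 0) :
    |corr μ (f1 ∘ X1) (f2 ∘ X2)| ≤ α :=
  corr_two_functions_bound_general μ X1 X2 hX1 hX2 hexch α hbound f1 f2 hf1 hf2 hm1 hm2 hv1 hv2
end

section
/- Let X and Y be discrete random variables where X takes m values, and suppose α ≥ 0 is such that for all real-valued functions f of X and g of Y with finite nonzero variance, |corr(f(X), g(Y))| ≤ α. Then the mutual information satisfies I(X;Y) ≤ (m-1)α². -/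
open MeasureTheory

/-- Shannon entropy of a random variable with finitely many values. -/
noncomputable def ent {Ω A : Type*} [MeasurableSpace Ω] [Fintype A]
    (μ : Measure Ω) (X : Ω → A) : ℝ :=
  ∑ a, Real.negMulLog ((μ (X ⁻¹' {a})).toReal)

/-!
Write `w`, `p`, `q` for the laws of `(X, Y)`, `X`, `Y`. Since `log t ≤ t - 1`, the mutual
information is at most the χ²-divergence `∑ₐ Tₐ / pₐ`, where `Tₐ = ∑_b (w(a,b) - pₐ q_b)² / q_b`.
For a fixed value `a`, the indicator `f(X) = 1{X = a}` and `g(Y) = P(X = a | Y) - P(X = a)` satisfy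
`Var f(X) = pₐ (1 - pₐ)` and `Cov(f(X), g(Y)) = Var g(Y) = Tₐ`, so the correlation bound says
`Tₐ ≤ α² pₐ (1 - pₐ)`. Summing `α² (1 - pₐ)` over the `m` values of `X` gives `(m - 1) α²`.
-/

open ProbabilityTheory Real Finset

-- When `x * y = 0`, both sides vanish because `r = 0` and `t / 0 = 0`.
theorem mul_log_sub_log_sub_log_le {r x y : ℝ} (hr : 0 ≤ r) (hrx : r ≤ x) (hry : r ≤ y) :
    r * (log r - log x - log y) ≤ (r - x * y) ^ 2 / (x * y) + (r - x * y) := by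
  rcases hr.eq_or_lt with rfl | hr
  · simp [sq, mul_self_div_self]
  have hx : 0 < x := hr.trans_le hrx
  have hy : 0 < y := hr.trans_le hry
  have hlog : log r - log x - log y = log (r / (x * y)) := by
    rw [log_div hr.ne' (by positivity), log_mul hx.ne' hy.ne']; ring
  calc r * (log r - log x - log y) ≤ r * (r / (x * y) - 1) := by
        rw [hlog]; exact mul_le_mul_of_nonneg_left (log_le_sub_one_of_pos (by positivity)) hr.le
    _ = (r - x * y) ^ 2 / (x * y) + (r - x * y) := by field_simp; ring

section JointMass

variable {A B : Type*} {w : A × B → ℝ} {p : A → ℝ} {q : B → ℝ}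

theorem le_marginal_fst [Fintype B] (hw : ∀ c, 0 ≤ w c) (hp : ∀ a, p a = ∑ b, w (a, b))
    (c : A × B) : w c ≤ p c.1 :=
  hp c.1 ▸ single_le_sum (fun b _ => hw (c.1, b)) (mem_univ c.2)

variable [Fintype A]

theorem le_marginal_snd (hw : ∀ c, 0 ≤ w c) (hq : ∀ b, q b = ∑ a, w (a, b))
    (c : A × B) : w c ≤ q c.2 :=
  hq c.2 ▸ single_le_sum (fun a _ => hw (a, c.2)) (mem_univ c.1)

/-- `condDev w p q a b` is `P(X = a | Y = b) - P(X = a)` when `w`, `p`, `q` are the laws of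
`(X, Y)`, `X`, `Y`. -/
noncomputable def condDev (w : A × B → ℝ) (p : A → ℝ) (q : B → ℝ) (a : A) (b : B) : ℝ :=
  (w (a, b) - p a * q b) / q b

theorem mul_condDev (hw : ∀ c, 0 ≤ w c) (hq : ∀ b, q b = ∑ a, w (a, b)) (a : A) (b : B) :
    q b * condDev w p q a b = w (a, b) - p a * q b := by
  rcases eq_or_ne (q b) 0 with hqb | hqb
  · have : w (a, b) = 0 := le_antisymm (hqb ▸ le_marginal_snd hw hq (a, b)) (hw _)
    simp [hqb, this]
  · exact mul_div_cancel₀ _ hqb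

variable [Fintype B]

theorem sum_marginal_fst (hp : ∀ a, p a = ∑ b, w (a, b)) (hw₁ : ∑ c, w c = 1) :
    ∑ a, p a = 1 := by
  simp only [hp, ← Fintype.sum_prod_type, hw₁]

theorem sum_marginal_snd (hq : ∀ b, q b = ∑ a, w (a, b)) (hw₁ : ∑ c, w c = 1) :
    ∑ b, q b = 1 := by
  simp only [hq, ← Fintype.sum_prod_type_right, hw₁]

theorem sum_mul_comp_snd (hq : ∀ b, q b = ∑ a, w (a, b)) (φ : B → ℝ) :
    ∑ c, w c * φ c.2 = ∑ b, q b * φ b := by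
  simp only [Fintype.sum_prod_type_right, hq, sum_mul]

theorem sum_negMulLog_marginals_sub_sum_negMulLog (hp : ∀ a, p a = ∑ b, w (a, b))
    (hq : ∀ b, q b = ∑ a, w (a, b)) :
    ∑ a, negMulLog (p a) + ∑ b, negMulLog (q b) - ∑ c, negMulLog (w c)
      = ∑ c, w c * (log (w c) - log (p c.1) - log (q c.2)) := by
  have hmarg : ∑ a, negMulLog (p a) + ∑ b, negMulLog (q b)
      = ∑ c, -(w c * log (p c.1)) + ∑ c, -(w c * log (q c.2)) := by
    rw [Fintype.sum_prod_type, Fintype.sum_prod_type_right]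
    simp only [negMulLog, hp, hq, neg_mul, sum_mul, sum_neg_distrib]
  rw [hmarg, ← sum_add_distrib, ← sum_sub_distrib]
  exact sum_congr rfl fun c _ => by rw [negMulLog]; ring

theorem sum_mul_log_sub_le_sum_sq_div (hw : ∀ c, 0 ≤ w c) (hp : ∀ a, p a = ∑ b, w (a, b))
    (hq : ∀ b, q b = ∑ a, w (a, b)) (hw₁ : ∑ c, w c = 1) :
    ∑ c, w c * (log (w c) - log (p c.1) - log (q c.2))
      ≤ ∑ a, (∑ b, (w (a, b) - p a * q b) ^ 2 / q b) / p a := by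
  have hcancel : ∑ c, (w c - p c.1 * q c.2) = 0 := by
    rw [sum_sub_distrib, hw₁, Fintype.sum_prod_type, ← sum_mul_sum, sum_marginal_fst hp hw₁,
      sum_marginal_snd hq hw₁, mul_one, sub_self]
  calc ∑ c, w c * (log (w c) - log (p c.1) - log (q c.2))
      ≤ ∑ c, ((w c - p c.1 * q c.2) ^ 2 / (p c.1 * q c.2) + (w c - p c.1 * q c.2)) :=
        sum_le_sum fun c _ =>
          mul_log_sub_log_sub_log_le (hw c) (le_marginal_fst hw hp c) (le_marginal_snd hw hq c)
    _ = ∑ a, (∑ b, (w (a, b) - p a * q b) ^ 2 / q b) / p a := by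
        rw [sum_add_distrib, hcancel, add_zero, Fintype.sum_prod_type]
        simp only [sum_div, div_div, mul_comm]

theorem sum_sq_div_eq_zero_of_marginal_eq_one (hw : ∀ c, 0 ≤ w c)
    (hp : ∀ a, p a = ∑ b, w (a, b)) (hq : ∀ b, q b = ∑ a, w (a, b)) (hw₁ : ∑ c, w c = 1)
    {a : A} (ha : p a = 1) :
    ∑ b, (w (a, b) - p a * q b) ^ 2 / q b = 0 := by
  have hgap : ∑ b, (q b - w (a, b)) = 0 := by
    rw [sum_sub_distrib, sum_marginal_snd hq hw₁, ← hp, ha, sub_self]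
  have hrow (b : B) : w (a, b) = q b := by
    have := (sum_eq_zero_iff_of_nonneg fun b _ => sub_nonneg.2 (le_marginal_snd hw hq (a, b))).1
      hgap b (mem_univ b)
    linarith
  simp [hrow, ha]

theorem sum_sq_div_div_le_sq_mul_one_sub (hw : ∀ c, 0 ≤ w c) (hp : ∀ a, p a = ∑ b, w (a, b))
    (hq : ∀ b, q b = ∑ a, w (a, b)) (hw₁ : ∑ c, w c = 1) {α : ℝ} {a : A}
    (h : 0 < p a → p a < 1 → ∑ b, (w (a, b) - p a * q b) ^ 2 / q b ≤ α ^ 2 * (p a * (1 - p a))) :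
    (∑ b, (w (a, b) - p a * q b) ^ 2 / q b) / p a ≤ α ^ 2 * (1 - p a) := by
  have hp₀ (a' : A) : 0 ≤ p a' := hp a' ▸ sum_nonneg fun b _ => hw (a', b)
  have hp₁ : p a ≤ 1 := sum_marginal_fst hp hw₁ ▸ single_le_sum (fun a' _ => hp₀ a') (mem_univ a)
  rcases (hp₀ a).eq_or_lt with hp₀ | hp₀
  · rw [← hp₀, div_zero, sub_zero, mul_one]
    exact sq_nonneg α
  rcases hp₁.eq_or_lt with hp₁ | hp₁
  · rw [sum_sq_div_eq_zero_of_marginal_eq_one hw hp hq hw₁ hp₁, hp₁]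
    simp
  rw [div_le_iff₀ hp₀]
  linarith [h hp₀ hp₁]

theorem sum_mul_condDev_eq_zero (hw : ∀ c, 0 ≤ w c) (hp : ∀ a, p a = ∑ b, w (a, b))
    (hq : ∀ b, q b = ∑ a, w (a, b)) (hw₁ : ∑ c, w c = 1) (a : A) :
    ∑ b, q b * condDev w p q a b = 0 := by
  rw [sum_congr rfl fun b _ => mul_condDev hw hq a b, sum_sub_distrib, ← hp, ← mul_sum,
    sum_marginal_snd hq hw₁, mul_one, sub_self]

theorem sum_mul_condDev_mul_self (hw : ∀ c, 0 ≤ w c) (hq : ∀ b, q b = ∑ a, w (a, b)) (a : A) :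
    ∑ b, q b * (condDev w p q a b * condDev w p q a b)
      = ∑ b, (w (a, b) - p a * q b) ^ 2 / q b := by
  refine sum_congr rfl fun b _ => ?_
  rw [← mul_assoc, mul_condDev hw hq, condDev, sq, mul_div_assoc]

theorem sum_joint_mul_condDev (hw : ∀ c, 0 ≤ w c) (hp : ∀ a, p a = ∑ b, w (a, b))
    (hq : ∀ b, q b = ∑ a, w (a, b)) (hw₁ : ∑ c, w c = 1) (a : A) :
    ∑ b, w (a, b) * condDev w p q a b = ∑ b, (w (a, b) - p a * q b) ^ 2 / q b := by
  have hsplit (b : B) : w (a, b) * condDev w p q a b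
      = (w (a, b) - p a * q b) ^ 2 / q b + p a * (q b * condDev w p q a b) := by
    rw [condDev]; ring
  rw [sum_congr rfl fun b _ => hsplit b, sum_add_distrib, ← mul_sum,
    sum_mul_condDev_eq_zero hw hp hq hw₁, mul_zero, add_zero]

end JointMass

section FiniteValued

variable {Ω C : Type*} [MeasurableSpace Ω] {μ : Measure Ω} [Fintype C] [MeasurableSpace C]
  [MeasurableSingletonClass C] {Z : Ω → C}

theorem integral_comp_eq_sum_measureReal [IsFiniteMeasure μ] (hZ : Measurable Z) (h : C → ℝ) :
    ∫ ω, h (Z ω) ∂μ = ∑ c, μ.real (Z ⁻¹' {c}) * h c := by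
  rw [← integral_map hZ.aemeasurable (measurable_of_finite h).aestronglyMeasurable,
    integral_fintype (.of_finite)]
  simp [Measure.real, Measure.map_apply hZ (measurableSet_singleton _)]

theorem cov_comp_eq_sum [IsProbabilityMeasure μ] (hZ : Measurable Z) (h₁ h₂ : C → ℝ) :
    cov μ (h₁ ∘ Z) (h₂ ∘ Z) = ∑ c, μ.real (Z ⁻¹' {c}) * (h₁ c * h₂ c)
      - (∑ c, μ.real (Z ⁻¹' {c}) * h₁ c) * ∑ c, μ.real (Z ⁻¹' {c}) * h₂ c := by
  have hmem (h : C → ℝ) : MemLp (h ∘ Z) 2 μ :=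
    (memLp_map_measure_iff (measurable_of_finite h).aestronglyMeasurable hZ.aemeasurable).1
      .of_discrete
  rw [cov, ← covariance, covariance_eq_sub (hmem h₁) (hmem h₂)]
  exact congr_arg₂ _ (integral_comp_eq_sum_measureReal hZ fun c => h₁ c * h₂ c)
    (congr_arg₂ _ (integral_comp_eq_sum_measureReal hZ h₁) (integral_comp_eq_sum_measureReal hZ h₂))

theorem sum_measureReal_preimage_singleton_eq_one [IsProbabilityMeasure μ] (hZ : Measurable Z) :
    ∑ c, μ.real (Z ⁻¹' {c}) = 1 := by
  rw [sum_measureReal_preimage_singleton univ fun c _ => hZ (measurableSet_singleton c)]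
  simp

end FiniteValued

theorem measureReal_preimage_eq_sum_fst {Ω A B : Type*} [MeasurableSpace Ω] {μ : Measure Ω}
    [IsFiniteMeasure μ] [Fintype B] [MeasurableSpace A] [MeasurableSingletonClass A]
    [MeasurableSpace B] [MeasurableSingletonClass B] {X : Ω → A} {Y : Ω → B}
    (hX : Measurable X) (hY : Measurable Y) (a : A) :
    μ.real (X ⁻¹' {a}) = ∑ b, μ.real ((fun ω => (X ω, Y ω)) ⁻¹' {(a, b)}) := by
  have hfiber : X ⁻¹' {a} = (fun ω => (X ω, Y ω)) ⁻¹' ↑({a} ×ˢ univ : Finset (A × B)) := by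
    ext ω; simp [eq_comm]
  rw [hfiber, ← sum_measureReal_preimage_singleton _
    fun _ _ => (hX.prodMk hY) (measurableSet_singleton _), sum_product, sum_singleton]

theorem measureReal_preimage_eq_sum_snd {Ω A B : Type*} [MeasurableSpace Ω] {μ : Measure Ω}
    [IsFiniteMeasure μ] [Fintype A] [MeasurableSpace A] [MeasurableSingletonClass A]
    [MeasurableSpace B] [MeasurableSingletonClass B] {X : Ω → A} {Y : Ω → B}
    (hX : Measurable X) (hY : Measurable Y) (b : B) :
    μ.real (Y ⁻¹' {b}) = ∑ a, μ.real ((fun ω => (X ω, Y ω)) ⁻¹' {(a, b)}) := by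
  have hfiber : Y ⁻¹' {b} = (fun ω => (X ω, Y ω)) ⁻¹' ↑(univ ×ˢ {b} : Finset (A × B)) := by
    ext ω; simp [eq_comm]
  rw [hfiber, ← sum_measureReal_preimage_singleton _
    fun _ _ => (hX.prodMk hY) (measurableSet_singleton _), sum_product]
  simp only [sum_singleton]

theorem sq_cov_le_of_abs_corr_le {Ω : Type*} [MeasurableSpace Ω] {μ : Measure Ω}
    {U V : Ω → ℝ} {α : ℝ} (hU : 0 < cov μ U U) (hV : 0 < cov μ V V)
    (h : |corr μ U V| ≤ α) : cov μ U V ^ 2 ≤ α ^ 2 * (cov μ U U * cov μ V V) := by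
  have hs : 0 < √(cov μ U U) * √(cov μ V V) := by positivity
  rw [corr, abs_div, abs_of_pos hs, div_le_iff₀ hs] at h
  calc cov μ U V ^ 2 = |cov μ U V| ^ 2 := (sq_abs _).symm
    _ ≤ (α * (√(cov μ U U) * √(cov μ V V))) ^ 2 := by gcongr
    _ = α ^ 2 * (cov μ U U * cov μ V V) := by
      rw [mul_pow, mul_pow, sq_sqrt hU.le, sq_sqrt hV.le]

theorem cov_self_le_of_cov_eq_cov_self {Ω : Type*} [MeasurableSpace Ω] {μ : Measure Ω}
    {U V : Ω → ℝ} {α : ℝ} (hU : 0 < cov μ U U) (hV : 0 ≤ cov μ V V)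
    (hUV : cov μ U V = cov μ V V) (h : cov μ V V ≠ 0 → |corr μ U V| ≤ α) :
    cov μ V V ≤ α ^ 2 * cov μ U U := by
  rcases hV.eq_or_lt with hV | hV
  · rw [← hV]; exact mul_nonneg (sq_nonneg α) hU.le
  have key := sq_cov_le_of_abs_corr_le hU hV (h hV.ne')
  rw [hUV] at key
  nlinarith

theorem sum_sq_div_le_of_abs_corr_le {Ω A B : Type*} [MeasurableSpace Ω] {μ : Measure Ω}
    [IsProbabilityMeasure μ] [Fintype A] [Fintype B] [MeasurableSpace A]
    [MeasurableSingletonClass A] [MeasurableSpace B] [MeasurableSingletonClass B]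
    {X : Ω → A} {Y : Ω → B} (hX : Measurable X) (hY : Measurable Y) {α : ℝ}
    (hbound : ∀ (f : A → ℝ) (g : B → ℝ),
      cov μ (f ∘ X) (f ∘ X) ≠ 0 → cov μ (g ∘ Y) (g ∘ Y) ≠ 0 → |corr μ (f ∘ X) (g ∘ Y)| ≤ α)
    {w : A × B → ℝ} {p : A → ℝ} {q : B → ℝ}
    (hw : ∀ c, μ.real ((fun ω => (X ω, Y ω)) ⁻¹' {c}) = w c)
    (hp : ∀ a, μ.real (X ⁻¹' {a}) = p a) (hq : ∀ b, μ.real (Y ⁻¹' {b}) = q b)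
    {a : A} (ha₀ : 0 < p a) (ha₁ : p a < 1) :
    ∑ b, (w (a, b) - p a * q b) ^ 2 / q b ≤ α ^ 2 * (p a * (1 - p a)) := by
  classical
  have hZ := hX.prodMk hY
  have hw₀ (c : A × B) : 0 ≤ w c := hw c ▸ measureReal_nonneg
  have hw₁ : ∑ c, w c = 1 := by simp only [← hw, sum_measureReal_preimage_singleton_eq_one hZ]
  have hpw (a : A) : p a = ∑ b, w (a, b) := by
    simp only [← hp, ← hw, measureReal_preimage_eq_sum_fst hX hY]
  have hqw (b : B) : q b = ∑ a, w (a, b) := by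
    simp only [← hq, ← hw, measureReal_preimage_eq_sum_snd hX hY]
  set T := ∑ b, (w (a, b) - p a * q b) ^ 2 / q b
  set f : A → ℝ := fun a' => if a' = a then 1 else 0
  set g : B → ℝ := condDev w p q a
  have hff : cov μ (f ∘ X) (f ∘ X) = p a * (1 - p a) := by
    simp only [cov_comp_eq_sum hX, hp]
    simp only [f, mul_ite, mul_one, mul_zero, sum_ite_eq', mem_univ, ↓reduceIte]
    ring
  have hgg : cov μ (g ∘ Y) (g ∘ Y) = T := by
    simp only [cov_comp_eq_sum hY, hq]
    rw [sum_mul_condDev_eq_zero hw₀ hpw hqw hw₁, sum_mul_condDev_mul_self hw₀ hqw, mul_zero,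
      sub_zero]
  have hfg : cov μ (f ∘ X) (g ∘ Y) = T := by
    change cov μ ((fun c : A × B => f c.1) ∘ fun ω => (X ω, Y ω))
      ((fun c : A × B => g c.2) ∘ fun ω => (X ω, Y ω)) = T
    simp only [cov_comp_eq_sum hZ, hw]
    rw [sum_mul_comp_snd hqw g, sum_mul_condDev_eq_zero hw₀ hpw hqw hw₁, mul_zero, sub_zero,
      Fintype.sum_prod_type]
    simp only [f, ite_mul, one_mul, zero_mul, mul_ite, mul_zero, sum_ite_irrel, sum_const_zero,
      sum_ite_eq', mem_univ, ↓reduceIte]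
    exact sum_joint_mul_condDev hw₀ hpw hqw hw₁ a
  have hT₀ : 0 ≤ T :=
    sum_nonneg fun b _ => div_nonneg (sq_nonneg _) (hqw b ▸ sum_nonneg fun a' _ => hw₀ (a', b))
  have hvar : 0 < p a * (1 - p a) := mul_pos ha₀ (sub_pos.2 ha₁)
  rw [← hff, ← hgg]
  exact cov_self_le_of_cov_eq_cov_self (hff ▸ hvar) (hgg ▸ hT₀) (hfg.trans hgg.symm)
    (hbound f g (hff ▸ hvar.ne'))

theorem mutual_information_le_of_corr_bound_general {Ω A B : Type*} [MeasurableSpace Ω]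
    [Fintype A] [Fintype B] [MeasurableSpace A] [MeasurableSingletonClass A]
    [MeasurableSpace B] [MeasurableSingletonClass B]
    (μ : Measure Ω) [IsProbabilityMeasure μ]
    (X : Ω → A) (Y : Ω → B) (hX : Measurable X) (hY : Measurable Y)
    (α : ℝ)
    (hbound : ∀ (f : A → ℝ) (g : B → ℝ),
      cov μ (f ∘ X) (f ∘ X) ≠ 0 → cov μ (g ∘ Y) (g ∘ Y) ≠ 0 →
      |corr μ (f ∘ X) (g ∘ Y)| ≤ α) :
    ent μ X + ent μ Y - ent μ (fun ω => (X ω, Y ω)) ≤ (Fintype.card A - 1) * α ^ 2 := by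
  set w : A × B → ℝ := fun c => μ.real ((fun ω => (X ω, Y ω)) ⁻¹' {c})
  set p : A → ℝ := fun a => μ.real (X ⁻¹' {a})
  set q : B → ℝ := fun b => μ.real (Y ⁻¹' {b})
  have hw₀ (c : A × B) : 0 ≤ w c := measureReal_nonneg
  have hw₁ : ∑ c, w c = 1 := sum_measureReal_preimage_singleton_eq_one (hX.prodMk hY)
  have hp : ∀ a, p a = ∑ b, w (a, b) := measureReal_preimage_eq_sum_fst hX hY
  have hq : ∀ b, q b = ∑ a, w (a, b) := measureReal_preimage_eq_sum_snd hX hY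
  calc ent μ X + ent μ Y - ent μ (fun ω => (X ω, Y ω))
      = ∑ c, w c * (log (w c) - log (p c.1) - log (q c.2)) :=
        sum_negMulLog_marginals_sub_sum_negMulLog hp hq
    _ ≤ ∑ a, (∑ b, (w (a, b) - p a * q b) ^ 2 / q b) / p a :=
        sum_mul_log_sub_le_sum_sq_div hw₀ hp hq hw₁
    _ ≤ ∑ a, α ^ 2 * (1 - p a) := sum_le_sum fun a _ =>
        sum_sq_div_div_le_sq_mul_one_sub hw₀ hp hq hw₁ fun ha₀ ha₁ =>
          sum_sq_div_le_of_abs_corr_le hX hY hbound (fun _ => rfl) (fun _ => rfl) (fun _ => rfl)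
            ha₀ ha₁
    _ = (Fintype.card A - 1) * α ^ 2 := by
        rw [← mul_sum, sum_sub_distrib, sum_marginal_fst hp hw₁, sum_const, card_univ,
          nsmul_eq_mul, mul_one, mul_comm]

/-- If all correlations `|corr(f(X), g(Y))|` are at most `α`, then the mutual information
`I(X;Y)` is at most `(m-1)·α²`, where `m` is the number of values of `X`. -/
theorem mutual_information_le_of_corr_bound {Ω A B : Type*} [MeasurableSpace Ω]
    [Fintype A] [Fintype B] [MeasurableSpace A] [MeasurableSingletonClass A]
    [MeasurableSpace B] [MeasurableSingletonClass B]
    (μ : Measure Ω) [IsProbabilityMeasure μ]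
    (X : Ω → A) (Y : Ω → B) (hX : Measurable X) (hY : Measurable Y)
    (α : ℝ) (hα : 0 ≤ α)
    (hbound : ∀ (f : A → ℝ) (g : B → ℝ),
      cov μ (f ∘ X) (f ∘ X) ≠ 0 → cov μ (g ∘ Y) (g ∘ Y) ≠ 0 →
      |corr μ (f ∘ X) (g ∘ Y)| ≤ α) :
    ent μ X + ent μ Y - ent μ (fun ω => (X ω, Y ω)) ≤ (Fintype.card A - 1) * α ^ 2 :=
  mutual_information_le_of_corr_bound_general μ X Y hX hY α hbound
end

section
/- In the free group F_r = ⟨a_1,…,a_r⟩ with r ≥ 1, if s_1,…,s_n are elements whose reduced forms are palindromes of length 2l+1 and s_{i+1} ≠ s_i^{-1} for all i, then the reduced form of the product s_1⋯s_n has length at least 2l+n, and its last l+1 letters agree with the last l+1 letters of s_n. -/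
/-!
Multiplying a reduced word `p` that ends like a palindrome `t` of length `2l+1` by another such
palindrome `u ≠ t⁻¹`, at most `l` letters cancel: if `l+1` letters cancelled, `u` would begin with
the inverse of the last `l+1` letters of `t`, which (as `t` is a palindrome) are the first `l+1`
letters of the palindrome `t⁻¹`; a palindrome of length `2l+1` is determined by its first `l+1`
letters, so `u = t⁻¹`. Hence every factor adds at least one letter, and its last `l+1` letters
survive in the product.
-/

theorem List.Palindrome.eq_of_take_eq {β : Type*} {p q : List β} (hp : p.Palindrome)
    (hq : q.Palindrome) (hlen : p.length = q.length) {k : ℕ} (hk : p.length ≤ 2 * k)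
    (h : p.take k = q.take k) : p = q := by
  have key : ∀ j < k, p[j]? = q[j]? := fun j hj => by
    simpa [List.getElem?_take, hj] using congrArg (·[j]?) h
  refine List.ext_getElem? fun i => ?_
  rcases lt_or_ge i k with hik | hik
  · exact key i hik
  rcases lt_or_ge i p.length with hi | hi
  · rw [← hp.reverse_eq, ← hq.reverse_eq, List.getElem?_reverse hi,
      List.getElem?_reverse (hlen ▸ hi), ← hlen]
    exact key _ (by omega)
  · rw [List.getElem?_eq_none hi, List.getElem?_eq_none (hlen ▸ hi)]

namespace FreeGroup

variable {α : Type*}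

theorem IsReduced.exists_reduce_append_eq [DecidableEq α] {L₁ L₂ : List (α × Bool)}
    (h₁ : IsReduced L₁) (h₂ : IsReduced L₂) :
    ∃ a w b, L₁ = a ++ w ∧ L₂ = invRev w ++ b ∧ reduce (L₁ ++ L₂) = a ++ b := by
  induction L₁ using List.reverseRecOn generalizing L₂ with
  | nil => exact ⟨[], [], L₂, rfl, rfl, h₂.reduce_eq⟩
  | append_singleton c x ih =>
    obtain ⟨x, β⟩ := x
    rcases L₂ with _ | ⟨⟨y, γ⟩, L₂⟩
    · exact ⟨c ++ [(x, β)], [], [], by simp, rfl, by simpa using h₁.reduce_eq⟩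
    by_cases hcancel : y = x ∧ γ = !β
    · obtain ⟨rfl, rfl⟩ := hcancel
      obtain ⟨a, w, b, rfl, rfl, hred⟩ :=
        ih (L₂ := L₂) (h₁.infix ⟨[], [(y, β)], by simp⟩) (h₂.infix ⟨[(y, !β)], [], by simp⟩)
      refine ⟨a, w ++ [(y, β)], b, by simp, by simp [invRev], ?_⟩
      rw [← hred,
        ← reduce.Step.eq (Red.Step.not (L₁ := a ++ w) (L₂ := invRev w ++ b) (x := y) (b := β))]
      simp
    · have hx : IsReduced ([(x, β)] ++ (y, γ) :: L₂) :=
        isReduced_cons_cons.2 ⟨fun h => by cases β <;> cases γ <;> simp_all, h₂⟩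
      exact ⟨c ++ [(x, β)], [], (y, γ) :: L₂, by simp, rfl,
        (h₁.append_overlap hx (by simp)).reduce_eq⟩

theorem exists_toWord_mul_eq [DecidableEq α] (x y : FreeGroup α) :
    ∃ a w b, x.toWord = a ++ w ∧ y.toWord = invRev w ++ b ∧ (x * y).toWord = a ++ b := by
  rw [toWord_mul]
  exact isReduced_toWord.exists_reduce_append_eq isReduced_toWord

theorem invRev_eq_map_of_palindrome {L : List (α × Bool)} (h : L.Palindrome) :
    invRev L = L.map fun g => (g.1, !g.2) := by
  rw [invRev, ← List.map_reverse, h.reverse_eq]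

theorem palindrome_invRev {L : List (α × Bool)} (h : L.Palindrome) : (invRev L).Palindrome := by
  rw [invRev_eq_map_of_palindrome h]
  exact h.map _

theorem length_le_of_cancel_palindrome [DecidableEq α] {l : ℕ} {p t u : FreeGroup α}
    {a w b : List (α × Bool)}
    (hpw : p.toWord = a ++ w) (huw : u.toWord = invRev w ++ b)
    (hsuf : p.toWord.reverse.take (l + 1) = t.toWord.reverse.take (l + 1))
    (ht : t.toWord.Palindrome) (htl : t.toWord.length = 2 * l + 1)
    (hu : u.toWord.Palindrome) (hul : u.toWord.length = 2 * l + 1) (hne : u ≠ t⁻¹) :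
    w.length ≤ l := by
  by_contra! hw
  have ht_take : t.toWord.take (l + 1) = w.reverse.take (l + 1) := by
    rw [← ht.reverse_eq, ← hsuf, hpw, List.reverse_append,
      List.take_append_of_le_length (by simp; omega)]
  have hu_take : u.toWord.take (l + 1) = t⁻¹.toWord.take (l + 1) := by
    rw [toWord_inv, invRev_eq_map_of_palindrome ht, ← List.map_take, ht_take, huw,
      List.take_append_of_le_length (by simp; omega), invRev, List.map_take, List.map_reverse]
  refine hne (toWord_injective (hu.eq_of_take_eq ?_ ?_ ?_ hu_take))
  · rw [toWord_inv]; exact palindrome_invRev ht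
  · rw [toWord_inv, invRev_length, hul, htl]
  · omega

theorem toWord_mul_of_palindrome [DecidableEq α] {l : ℕ} {p t u : FreeGroup α}
    (hsuf : p.toWord.reverse.take (l + 1) = t.toWord.reverse.take (l + 1))
    (ht : t.toWord.Palindrome) (htl : t.toWord.length = 2 * l + 1)
    (hu : u.toWord.Palindrome) (hul : u.toWord.length = 2 * l + 1) (hne : u ≠ t⁻¹) :
    p.toWord.length + 1 ≤ (p * u).toWord.length ∧
      (p * u).toWord.reverse.take (l + 1) = u.toWord.reverse.take (l + 1) := by
  obtain ⟨a, w, b, hpw, huw, hpu⟩ := exists_toWord_mul_eq p u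
  have hw := length_le_of_cancel_palindrome hpw huw hsuf ht htl hu hul hne
  have hp_len := congrArg List.length hpw
  have hu_len := congrArg List.length huw
  simp only [List.length_append, invRev_length] at hp_len hu_len
  refine ⟨?_, ?_⟩
  · rw [hpu, List.length_append]
    omega
  · rw [hpu, huw, List.reverse_append, List.reverse_append,
      List.take_append_of_le_length (by simp; omega),
      List.take_append_of_le_length (by simp; omega)]

theorem toWord_mul_prod_of_isChain [DecidableEq α] {l : ℕ} (L : List (FreeGroup α))
    {p t : FreeGroup α}
    (hpal : ∀ u ∈ t :: L, u.toWord.Palindrome ∧ u.toWord.length = 2 * l + 1)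
    (hchain : (t :: L).IsChain fun a b => b ≠ a⁻¹)
    (hsuf : p.toWord.reverse.take (l + 1) = t.toWord.reverse.take (l + 1)) :
    p.toWord.length + L.length ≤ (p * L.prod).toWord.length ∧
      (p * L.prod).toWord.reverse.take (l + 1) =
        ((t :: L).getLast (List.cons_ne_nil _ _)).toWord.reverse.take (l + 1) := by
  induction L generalizing p t with
  | nil => simpa using hsuf
  | cons u L ih =>
    obtain ⟨hne, hchain⟩ := List.isChain_cons_cons.1 hchain
    obtain ⟨ht, htl⟩ := hpal t List.mem_cons_self
    obtain ⟨hu, hul⟩ := hpal u (List.mem_cons_of_mem _ List.mem_cons_self)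
    obtain ⟨hpu_len, hpu_suf⟩ := toWord_mul_of_palindrome hsuf ht htl hu hul hne
    obtain ⟨ih_len, ih_suf⟩ := ih (fun v hv => hpal v (List.mem_cons_of_mem _ hv)) hchain hpu_suf
    rw [List.prod_cons, ← mul_assoc, List.getLast_cons (List.cons_ne_nil _ _)]
    exact ⟨by simp only [List.length_cons]; omega, ih_suf⟩

end FreeGroup

/-- Products of distinct-from-inverse palindromes of length `2l+1` in the free group:
the reduced form of `s₁⋯sₙ` has length at least `2l+n` and its last `l+1` letters agree
with those of `sₙ`. -/
theorem palindrome_product_length (r l n : ℕ) (hn : 1 ≤ n)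
    (s : Fin n → FreeGroup (Fin r))
    (hpal : ∀ i, List.Palindrome (s i).toWord ∧ (s i).toWord.length = 2 * l + 1)
    (hne : ∀ (i : ℕ) (h : i + 1 < n), s ⟨i + 1, h⟩ ≠ (s ⟨i, by omega⟩)⁻¹) :
    2 * l + n ≤ ((List.ofFn s).prod).toWord.length ∧
      (((List.ofFn s).prod).toWord).reverse.take (l + 1)
        = ((s ⟨n - 1, by omega⟩).toWord).reverse.take (l + 1) := by
  obtain ⟨m, rfl⟩ : ∃ m, n = m + 1 := ⟨n - 1, by omega⟩
  have hpal_ofFn : ∀ u ∈ List.ofFn s, u.toWord.Palindrome ∧ u.toWord.length = 2 * l + 1 := by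
    intro u hu
    obtain ⟨i, rfl⟩ := List.mem_ofFn.1 hu
    exact hpal i
  have hchain : (List.ofFn s).IsChain fun a b => b ≠ a⁻¹ := List.isChain_ofFn.2 hne
  have hlast : (List.ofFn s).getLast (by simp) = s ⟨m + 1 - 1, by omega⟩ := List.getLast_ofFn ..
  simp only [List.ofFn_succ] at hpal_ofFn hchain hlast ⊢
  obtain ⟨hlen, hsuf⟩ := FreeGroup.toWord_mul_prod_of_isChain _ hpal_ofFn hchain rfl
  rw [List.prod_cons, hsuf, hlast]
  simp only [List.length_ofFn] at hlen
  exact ⟨by rw [(hpal 0).2] at hlen; omega, rfl⟩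
end

section
/- In the free group F_r with r ≥ 2 and odd integer k = 2l+1, there is a subset S_0 of elements of length k (in the word metric with respect to the standard symmetric generating set) with |S_0| = r(2r-1)^l that freely generates a free subgroup of rank r(2r-1)^l. -/
/-!
Let `P` be the set of reduced words of length `l + 1` beginning with a positive letter; there are
`r (2r-1)^l` of them. Each `p ∈ P` extends to the reduced palindrome
`s_p = p ++ p.dropLast.reverse` of length `2l + 1`, and `s_p⁻¹` is the palindrome on `p` with
every exponent flipped. Hence the prefixes of length `l + 1` of the `2|P|` words `s_p^{±1}` are
pairwise distinct. Fewer than `l + 1` letters of `s` cancel in `s * g` unless `g` begins with the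
prefix of `s⁻¹`, so multiplication by `s^{±1}` maps everything outside the cylinder of
`s^{∓1}` into the cylinder of `s^{±1}`, and the ping-pong lemma applies.
-/

namespace List

variable {β : Type*}

def oddPalindrome (p : List β) : List β := p ++ p.dropLast.reverse

theorem length_oddPalindrome (p : List β) : (oddPalindrome p).length = 2 * p.length - 1 := by
  simp only [oddPalindrome, length_append, length_reverse, length_dropLast]
  omega

theorem take_length_oddPalindrome (p : List β) : (oddPalindrome p).take p.length = p :=
  take_left ..

theorem reverse_oddPalindrome (p : List β) : (oddPalindrome p).reverse = oddPalindrome p := by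
  rcases eq_nil_or_concat p with rfl | ⟨q, x, rfl⟩ <;> simp [oddPalindrome]

theorem map_oddPalindrome {γ : Type*} (f : β → γ) (p : List β) :
    (oddPalindrome p).map f = oddPalindrome (p.map f) := by
  simp [oddPalindrome, map_dropLast]

theorem disjoint_setOf_prefix {γ : Type*} (f : γ → List β) {p q : List β}
    (hl : p.length = q.length) (hpq : p ≠ q) : _root_.Disjoint {x | p <+: f x} {x | q <+: f x} :=
  Set.disjoint_left.2 fun _ hp hq => hpq (prefix_of_prefix_length_le hp hq hl.le |>.eq_of_length hl)

end List

namespace FreeGroup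

open List Function

universe u

variable {α : Type u}

theorem snd_eq_of_fst_eq_of_ne {a b : α × Bool} (h : b ≠ (a.1, !a.2)) (h₁ : a.1 = b.1) :
    a.2 = b.2 := by
  obtain ⟨x, _ | _⟩ := a <;> obtain ⟨y, _ | _⟩ := b <;> simp_all

theorem isReduced_oddPalindrome {p : List (α × Bool)} (hp : IsReduced p) :
    IsReduced (oddPalindrome p) := by
  rcases eq_nil_or_concat p with rfl | ⟨q, x, rfl⟩
  · exact .nil
  rw [concat_eq_append] at hp
  have hrev : IsReduced ([x] ++ q.reverse) := by
    rw [singleton_append, ← reverse_concat', IsReduced, isChain_reverse]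
    exact hp.imp fun _ _ h e => (h e.symm).symm
  simpa [oddPalindrome] using hp.append_overlap hrev (by simp)

theorem invRev_oddPalindrome (p : List (α × Bool)) :
    invRev (oddPalindrome p) = oddPalindrome (p.map fun x => (x.1, !x.2)) := by
  rw [invRev, map_oddPalindrome, reverse_oddPalindrome]

section Reduce

variable [DecidableEq α]

theorem exists_reduce_append_eq {A B : List (α × Bool)} (hA : IsReduced A) (hB : IsReduced B) :
    ∃ A' B' C, A = A' ++ C ∧ B = invRev C ++ B' ∧ reduce (A ++ B) = A' ++ B' := by
  induction A using List.reverseRecOn generalizing B with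
  | nil => exact ⟨[], B, [], rfl, rfl, hB.reduce_eq⟩
  | append_singleton A x ih =>
    rcases B with _ | ⟨y, B⟩
    · exact ⟨A ++ [x], [], [], by simp, rfl, by simpa using hA.reduce_eq⟩
    by_cases hxy : y = (x.1, !x.2)
    · subst hxy
      obtain ⟨A', B', C, rfl, rfl, h⟩ :=
        ih (hA.infix (infix_append_left ..)) (hB.infix (suffix_cons ..).isInfix)
      refine ⟨A', B', C ++ [x], by simp, by simp [invRev], ?_⟩
      rw [← h]
      exact reduce.Step.eq <| by
        simpa using Red.Step.not (L₁ := A' ++ C) (L₂ := invRev C ++ B') (x := x.1) (b := x.2)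
    · have hcons : IsReduced ([x] ++ y :: B) :=
        isReduced_cons_cons.2 ⟨snd_eq_of_fst_eq_of_ne hxy, hB⟩
      refine ⟨A ++ [x], y :: B, [], by simp, by simp [invRev], ?_⟩
      simpa using (hA.append_overlap hcons (by simp)).reduce_eq

theorem take_toWord_prefix_toWord_mul {s g : FreeGroup α} {m : ℕ}
    (hm : 2 * m ≤ s.toWord.length + 1) (hg : ¬ s⁻¹.toWord.take m <+: g.toWord) :
    s.toWord.take m <+: (s * g).toWord := by
  obtain ⟨A', B', C, hs, hg', hsg⟩ :=
    exists_reduce_append_eq (isReduced_toWord (x := s)) (isReduced_toWord (x := g))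
  rw [toWord_mul, hsg, hs]
  by_cases hC : m ≤ C.length
  · refine absurd ?_ hg
    rw [toWord_inv, hs, hg', invRev_append, take_append_of_le_length (by simpa using hC)]
    exact (take_prefix m _).trans (prefix_append _ _)
  · rw [hs, length_append] at hm
    rw [take_append_of_le_length (by omega)]
    exact (take_prefix m _).trans (prefix_append _ _)

theorem injective_lift_of_distinct_prefixes {ι : Type u} [Nontrivial ι] (a : ι → FreeGroup α)
    (m : ℕ) (hlen : ∀ i, 2 * m ≤ (a i).toWord.length + 1)
    (hX : Injective fun i => (a i).toWord.take m)
    (hY : Injective fun i => (a i)⁻¹.toWord.take m)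
    (hXY : ∀ i j, (a i).toWord.take m ≠ (a j)⁻¹.toWord.take m) :
    Injective (lift a) := by
  have hlen' : ∀ i, 2 * m ≤ (a i)⁻¹.toWord.length + 1 := by simpa using hlen
  have hm : ∀ i, ((a i).toWord.take m).length = m := fun i =>
    length_take_of_le (by have := hlen i; omega)
  have hm' : ∀ i, ((a i)⁻¹.toWord.take m).length = m := fun i =>
    length_take_of_le (by have := hlen' i; omega)
  refine injective_lift_of_ping_pong a (fun i => {g | (a i).toWord.take m <+: g.toWord})
    (fun i => {g | (a i)⁻¹.toWord.take m <+: g.toWord})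
    (fun i => ⟨a i, show _ <+: _ from take_prefix _ _⟩)
    (fun i j hij => disjoint_setOf_prefix _ ((hm i).trans (hm j).symm) (hX.ne hij))
    (fun i j hij => disjoint_setOf_prefix _ ((hm' i).trans (hm' j).symm) (hY.ne hij))
    (fun i j => disjoint_setOf_prefix _ ((hm i).trans (hm' j).symm) (hXY i j)) ?_ ?_
  · rintro i _ ⟨g, hg, rfl⟩
    exact take_toWord_prefix_toWord_mul (hlen i) hg
  · rintro i _ ⟨g, hg, rfl⟩
    exact take_toWord_prefix_toWord_mul (hlen' i) (by simpa using hg)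

theorem toWord_mk_oddPalindrome {p : List (α × Bool)} (hp : IsReduced p) :
    (mk (oddPalindrome p)).toWord = oddPalindrome p := by
  rw [toWord_mk, (isReduced_oddPalindrome hp).reduce_eq]

theorem injective_lift_mk_oddPalindrome {ι : Type u} [Nontrivial ι] {p : ι → List (α × Bool)}
    (hp : Injective p) (hred : ∀ i, IsReduced (p i)) {m : ℕ} (hlen : ∀ i, (p i).length = m)
    (hpos : ∀ i, ∃ x, (p i).head? = some (x, true)) :
    Injective (lift fun i => mk (oddPalindrome (p i))) := by
  have hX : ∀ i, (mk (oddPalindrome (p i))).toWord.take m = p i := fun i => by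
    rw [toWord_mk_oddPalindrome (hred i), ← hlen i, take_length_oddPalindrome]
  have hY : ∀ i, (mk (oddPalindrome (p i)))⁻¹.toWord.take m =
      (p i).map fun x => (x.1, !x.2) := fun i => by
    rw [toWord_inv, toWord_mk_oddPalindrome (hred i), invRev_oddPalindrome, ← hlen i,
      ← length_map (fun x : α × Bool => (x.1, !x.2)), take_length_oddPalindrome]
  refine injective_lift_of_distinct_prefixes _ m (fun i => ?_) ?_ ?_ ?_
  · rw [toWord_mk_oddPalindrome (hred i), length_oddPalindrome, hlen]
    omega
  · simpa only [hX] using hp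
  · simp only [hY]
    exact (map_injective_iff.2 fun x y h => by simpa [Prod.ext_iff] using h).comp hp
  · intro i j h
    obtain ⟨x, hx⟩ := hpos i
    obtain ⟨y, hy⟩ := hpos j
    rw [hX, hY] at h
    simpa [hx, hy] using congrArg head? h

end Reduce

section Choices

variable [Fintype α] [DecidableEq α]

noncomputable def nextLetter (a : α × Bool) : Fin (2 * Fintype.card α - 1) ↪ α × Bool :=
  (Fintype.equivFinOfCardEq (by simp [mul_comm] : Fintype.card {b // b ≠ (a.1, !a.2)} = _)).symm
    |>.toEmbedding.trans (Embedding.subtype _)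

theorem nextLetter_ne (a : α × Bool) (d : Fin (2 * Fintype.card α - 1)) :
    nextLetter a d ≠ (a.1, !a.2) :=
  ((Fintype.equivFinOfCardEq (α := {b // b ≠ (a.1, !a.2)}) _).symm d).2

noncomputable def wordOfChoices (a : α × Bool) :
    List (Fin (2 * Fintype.card α - 1)) → List (α × Bool)
  | [] => [a]
  | d :: ds => a :: wordOfChoices (nextLetter a d) ds

theorem wordOfChoices_eq_cons (a : α × Bool) (ds : List (Fin (2 * Fintype.card α - 1))) :
    wordOfChoices a ds = a :: (wordOfChoices a ds).tail := by
  cases ds <;> rfl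

theorem length_wordOfChoices (a : α × Bool) (ds : List (Fin (2 * Fintype.card α - 1))) :
    (wordOfChoices a ds).length = ds.length + 1 := by
  induction ds generalizing a <;> simp [wordOfChoices, *]

theorem isReduced_wordOfChoices (a : α × Bool) (ds : List (Fin (2 * Fintype.card α - 1))) :
    IsReduced (wordOfChoices a ds) := by
  induction ds generalizing a with
  | nil => exact .singleton
  | cons d ds ih =>
    rw [wordOfChoices, wordOfChoices_eq_cons, isReduced_cons_cons, ← wordOfChoices_eq_cons]
    exact ⟨snd_eq_of_fst_eq_of_ne (nextLetter_ne a d), ih _⟩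

theorem wordOfChoices_inj {a a' : α × Bool} {ds ds' : List (Fin (2 * Fintype.card α - 1))} :
    wordOfChoices a ds = wordOfChoices a' ds' ↔ a = a' ∧ ds = ds' := by
  refine ⟨fun h => ?_, by rintro ⟨rfl, rfl⟩; rfl⟩
  induction ds generalizing a a' ds' with
  | nil =>
    cases ds' with
    | nil => simpa [wordOfChoices] using h
    | cons => simpa [length_wordOfChoices] using congrArg length h
  | cons d ds ih =>
    cases ds' with
    | nil => simpa [length_wordOfChoices] using congrArg length h
    | cons d' ds' =>
      obtain ⟨rfl, h⟩ := cons_eq_cons.1 h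
      obtain ⟨hd, rfl⟩ := ih h
      exact ⟨rfl, by rw [(nextLetter a).injective hd]⟩

end Choices

theorem injective_lift_subtype_val_image {ι G : Type*} [Group G] [Fintype ι] [DecidableEq G]
    {f : ι → G} (hf : Injective (lift f)) :
    Injective (lift (Subtype.val : {x // x ∈ Finset.univ.image f} → G)) := by
  have hf' : Injective f := by simpa [comp_def] using hf.comp of_injective
  let e : ι ≃ {x // x ∈ Finset.univ.image f} := Equiv.ofBijective
    (fun i => ⟨f i, Finset.mem_image_of_mem _ (Finset.mem_univ _)⟩)
    ⟨fun i j h => hf' (congrArg Subtype.val h), fun ⟨x, hx⟩ => by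
      obtain ⟨i, -, rfl⟩ := Finset.mem_image.1 hx
      exact ⟨i, rfl⟩⟩
  have : lift (Subtype.val : {x // x ∈ Finset.univ.image f} → G) =
      (lift f).comp (freeGroupCongr e.symm).toMonoidHom := by
    ext x
    simp only [MonoidHom.coe_comp, comp_apply, lift_apply_of, MulEquiv.coe_toMonoidHom,
      freeGroupCongr_apply, map.of]
    exact congrArg Subtype.val (e.apply_symm_apply x).symm
  rw [this]
  exact hf.comp (freeGroupCongr e.symm).injective

end FreeGroup

open FreeGroup List in
/-- In `F_r` (`r ≥ 2`), for odd `k = 2l+1` there is a set `S₀` of `r(2r-1)^l` elements,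
all of length `k`, freely generating a free subgroup of rank `r(2r-1)^l`. -/
theorem exists_free_subgroup_odd_length (r l : ℕ) (hr : 2 ≤ r) :
    ∃ S0 : Finset (FreeGroup (Fin r)),
      S0.card = r * (2 * r - 1) ^ l ∧
      (∀ s ∈ S0, s.toWord.length = 2 * l + 1) ∧
      Function.Injective
        (FreeGroup.lift (fun x : {x // x ∈ S0} => (x : FreeGroup (Fin r)))) := by
  have : Nontrivial (Fin r) := Fin.nontrivial_iff_two_le.2 hr
  have : Nonempty (Fin (2 * Fintype.card (Fin r) - 1)) :=
    ⟨⟨0, by rw [Fintype.card_fin]; omega⟩⟩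
  let p : Fin r × (Fin l → Fin (2 * Fintype.card (Fin r) - 1)) → List (Fin r × Bool) :=
    fun z => wordOfChoices (z.1, true) (ofFn z.2)
  have hp : Function.Injective p := fun z z' h => by
    obtain ⟨h₁, h₂⟩ := wordOfChoices_inj.1 h
    exact Prod.ext (Prod.ext_iff.1 h₁).1 (ofFn_injective h₂)
  have hlen : ∀ z, (p z).length = l + 1 := fun z => by simp [p, length_wordOfChoices]
  have hlift := injective_lift_mk_oddPalindrome hp (fun z => isReduced_wordOfChoices _ _) hlen
    fun z => ⟨z.1, by simp only [p]; rw [wordOfChoices_eq_cons]; rfl⟩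
  refine ⟨Finset.univ.image fun z => mk (oddPalindrome (p z)), ?_, ?_,
    injective_lift_subtype_val_image hlift⟩
  · have hs : Function.Injective fun z => mk (oddPalindrome (p z)) := by
      simpa [Function.comp_def] using hlift.comp of_injective
    rw [Finset.card_image_of_injective _ hs]
    simp
  · refine Finset.forall_mem_image.2 fun z _ => ?_
    rw [toWord_mk_oddPalindrome (isReduced_wordOfChoices _ _), length_oddPalindrome, hlen]
    omega
end

section
/- Let G = Z_2 * ⋯ * Z_2 (d ≥ 3 factors), and for j ∈ {1,…,d-1} let φ_j be the index shift a_i ↦ a_{i+j mod d}. Let S_0 be the set of words φ_j(b_l)⋯φ_j(b_1) b_1 b_2⋯b_l where b_1 = a_1, b_{i+1} ≠ b_i, and j ∈ {1,…,d-1}. If s_1,…,s_n ∈ S_0 ∪ S_0^{-1} with s_{i+1} ≠ s_i^{-1} for all i, then the reduced form of s_1⋯s_n ends with the last l letters of s_n if s_n ∈ S_0^{-1}, and with the last l+1 letters of s_n if s_n ∈ S_0; in particular s_1⋯s_n ≠ e for n ≥ 1. -/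
/-- Reduction of words over the alphabet `{a_1,…,a_d}` where each letter is an
involution: repeatedly cancel adjacent equal letters. The result is the reduced form. -/
def reduceZ {d : ℕ} : List (Fin d) → List (Fin d)
  | [] => []
  | a :: t =>
    match reduceZ t with
    | [] => [a]
    | b :: t' => if a = b then t' else a :: b :: t'

/-!
Write a word of `S₀` as `φ_j(B)⁻¹ B` with `B = b_1⋯b_l`; it is reduced because its middle
letters are `φ_j(a_1) ≠ a_1`. In a product `R·t` of reduced words, cancellation stops at the
first position where `R` read backwards and `t` differ. By induction on `k`, the reduced
form of `s_1⋯s_k` ends with the tail `φ_j(a_1) a_1 b_2⋯b_l` of `s_k` if `s_k ∈ S₀`, and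
with the tail `φ_j(b_1)⋯φ_j(b_l)` if `s_k ∈ S₀⁻¹`. Read backwards, such a tail differs
from the first `l` (resp. `l + 1`) letters of the next factor `s_{k+1}` unless
`s_{k+1} = s_k⁻¹`: either the letters `a_1` and `φ_j(a_1)` meet at the same position, or
both words determine `(j, B)`. So the cancellation never reaches the tail of `s_{k+1}`.
-/

namespace NestedPalindrome

variable {d : ℕ}

def reduceCons (a : Fin d) : List (Fin d) → List (Fin d)
  | [] => [a]
  | b :: t => if a = b then t else a :: b :: t

theorem reduceZ_cons (a : Fin d) (t : List (Fin d)) :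
    reduceZ (a :: t) = reduceCons a (reduceZ t) := by
  cases h : reduceZ t <;> simp [reduceZ, reduceCons, h]

theorem isChain_reduceCons (a : Fin d) {z : List (Fin d)} (hz : z.IsChain (· ≠ ·)) :
    (reduceCons a z).IsChain (· ≠ ·) := by
  cases z with
  | nil => simp [reduceCons]
  | cons b t =>
    by_cases h : a = b
    · simpa [reduceCons, h] using hz.tail
    · simpa [reduceCons, h] using hz

theorem isChain_reduceZ (x : List (Fin d)) : (reduceZ x).IsChain (· ≠ ·) := by
  induction x with
  | nil => simp [reduceZ]
  | cons a t ih => rw [reduceZ_cons]; exact isChain_reduceCons a ih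

theorem reduceZ_eq_self {x : List (Fin d)} (hx : x.IsChain (· ≠ ·)) : reduceZ x = x := by
  induction x with
  | nil => rfl
  | cons a t ih =>
    rw [reduceZ_cons, ih hx.tail]
    cases t with
    | nil => rfl
    | cons b t => simp [reduceCons, (List.isChain_cons_cons.mp hx).1]

theorem reduceCons_reduceCons (a : Fin d) {z : List (Fin d)} (hz : z.IsChain (· ≠ ·)) :
    reduceCons a (reduceCons a z) = z := by
  match z, hz with
  | [], _ => simp [reduceCons]
  | [b], _ => by_cases h : a = b <;> simp [reduceCons, h]
  | b :: c :: t, hz =>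
    by_cases h : a = b
    · subst h; simp [reduceCons, (List.isChain_cons_cons.mp hz).1]
    · simp [reduceCons, h]

theorem reduceZ_append_reduceZ (x y : List (Fin d)) :
    reduceZ (x ++ reduceZ y) = reduceZ (x ++ y) := by
  induction x with
  | nil => exact reduceZ_eq_self (isChain_reduceZ y)
  | cons a t ih => simp only [List.cons_append, reduceZ_cons, ih]

theorem reduceZ_reduceCons_append (a : Fin d) (z y : List (Fin d)) :
    reduceZ (reduceCons a z ++ y) = reduceCons a (reduceZ (z ++ y)) := by
  cases z with
  | nil => simp [reduceCons, reduceZ_cons]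
  | cons b t =>
    by_cases h : a = b
    · subst h
      rw [show reduceCons a (a :: t) = t by simp [reduceCons], List.cons_append, reduceZ_cons,
        reduceCons_reduceCons _ (isChain_reduceZ _)]
    · simp [reduceCons, h, reduceZ_cons]

theorem reduceZ_reduceZ_append (x y : List (Fin d)) :
    reduceZ (reduceZ x ++ y) = reduceZ (x ++ y) := by
  induction x with
  | nil => rfl
  | cons a t ih =>
    rw [reduceZ_cons, reduceZ_reduceCons_append, ih, List.cons_append, reduceZ_cons]

theorem reduceZ_append_cons_cons (x y : List (Fin d)) (a : Fin d) :
    reduceZ (x ++ a :: a :: y) = reduceZ (x ++ y) := by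
  rw [← reduceZ_append_reduceZ, reduceZ_cons, reduceZ_cons,
    reduceCons_reduceCons _ (isChain_reduceZ y), reduceZ_append_reduceZ]

theorem drop_suffix_reduceZ_append {R t : List (Fin d)} (hR : R.IsChain (· ≠ ·))
    (ht : t.IsChain (· ≠ ·)) {k m : ℕ} (h : R.reverse.take k ≠ t.take k)
    (hkm : k ≤ m + 1) :
    t.drop m <:+ reduceZ (R ++ t) := by
  induction R using List.reverseRecOn generalizing t k m with
  | nil => rw [List.nil_append, reduceZ_eq_self ht]; exact List.drop_suffix m t
  | append_singleton R x ih =>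
    cases t with
    | nil => simp
    | cons y t =>
      by_cases hxy : x = y
      · subst hxy
        obtain ⟨k, rfl⟩ : ∃ k', k = k' + 1 := ⟨k - 1, by rcases k with _ | k <;> simp_all⟩
        obtain ⟨m, rfl⟩ : ∃ m', m = m' + 1 := ⟨m - 1, by rcases m with _ | m <;> simp_all⟩
        rw [List.append_assoc, List.singleton_append, reduceZ_append_cons_cons]
        exact ih (hR.prefix (List.prefix_append _ _)) ht.tail (by simpa using h) (by omega)
      · rw [reduceZ_eq_self (List.isChain_append.mpr ⟨hR, ht, by simpa using hxy⟩)]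
        exact (List.drop_suffix _ _).trans (List.suffix_append _ _)

theorem take_reverse_reduceZ_append {R t : List (Fin d)} (hR : R.IsChain (· ≠ ·))
    (ht : t.IsChain (· ≠ ·)) {k m : ℕ} (h : R.reverse.take k ≠ t.take k)
    (hkm : k ≤ m + 1) :
    (reduceZ (R ++ t)).reverse.take (t.length - m) = t.reverse.take (t.length - m) := by
  have := (drop_suffix_reduceZ_append hR ht h hkm).reverse
  rw [List.prefix_iff_eq_take, List.reverse_drop] at this
  simpa using this.symm

variable [NeZero d]

def nest (j : Fin d) (B : List (Fin d)) : List (Fin d) := (B.map (· + j)).reverse ++ B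

/-- `nest j (0 :: B)` is `φ_j(b_l)⋯φ_j(b_1) b_1⋯b_l` with `a_1` encoded as `0` and
`B = [b_2, …, b_l]`, so `n = l - 1`. -/
def IsNested (n : ℕ) (w : List (Fin d)) : Prop :=
  ∃ j ≠ 0, ∃ B : List (Fin d),
    B.length = n ∧ (0 :: B).IsChain (· ≠ ·) ∧ w = nest j (0 :: B)

def IsNestedOrInv (n : ℕ) (w : List (Fin d)) : Prop :=
  IsNested n w ∨ IsNested n w.reverse

theorem take_nest (j : Fin d) {B : List (Fin d)} {n : ℕ} (hB : B.length = n) :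
    (nest j (0 :: B)).take (n + 1) = (B.map (· + j)).reverse ++ [j] := by
  subst hB; simp [nest, List.take_append]

theorem take_reverse_nest (j : Fin d) {B : List (Fin d)} {n : ℕ} (hB : B.length = n) :
    (nest j (0 :: B)).reverse.take (n + 2) = B.reverse ++ [0, j] := by
  subst hB; simp [nest, List.take_append]

theorem take_reverse_nest' (j : Fin d) {B : List (Fin d)} {n : ℕ} (hB : B.length = n) :
    (nest j (0 :: B)).reverse.take (n + 1) = B.reverse ++ [0] := by
  subst hB; simp [nest, List.take_append]

theorem isChain_nest {j : Fin d} (hj : j ≠ 0) {B : List (Fin d)}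
    (hB : (0 :: B).IsChain (· ≠ ·)) :
    (nest j (0 :: B)).IsChain (· ≠ ·) := by
  have hBj : ((0 :: B).map (· + j)).IsChain (· ≠ ·) :=
    List.isChain_map _ |>.mpr (hB.imp fun a b hab h => hab (add_right_cancel h))
  refine List.isChain_append.mpr ⟨List.isChain_reverse.mpr (hBj.imp fun _ _ => Ne.symm), hB, ?_⟩
  simpa using hj

theorem IsNestedOrInv.isChain {n : ℕ} {w : List (Fin d)} (hw : IsNestedOrInv n w) :
    w.IsChain (· ≠ ·) := by
  rcases hw with ⟨j, hj, B, -, hB, rfl⟩ | ⟨j, hj, B, -, hB, hw⟩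
  · exact isChain_nest hj hB
  · rw [← List.reverse_reverse w, hw]
    exact List.isChain_reverse.mpr ((isChain_nest hj hB).imp fun _ _ => Ne.symm)

theorem IsNestedOrInv.length {n : ℕ} {w : List (Fin d)} (hw : IsNestedOrInv n w) :
    w.length = 2 * n + 2 := by
  rcases hw with ⟨j, -, B, rfl, -, rfl⟩ | ⟨j, -, B, rfl, -, hw⟩
  · simp [nest]; ring
  · rw [← List.length_reverse, hw]; simp [nest]; ring

def EndsLike (n : ℕ) (u R : List (Fin d)) : Prop :=
  (IsNested n u → R.reverse.take (n + 2) = u.reverse.take (n + 2)) ∧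
  (IsNested n u.reverse → R.reverse.take (n + 1) = u.reverse.take (n + 1))

section EndsLike

variable {n : ℕ} {u t R : List (Fin d)}

theorem EndsLike.take_succ (h : EndsLike n u R) (hu : IsNested n u) :
    R.reverse.take (n + 1) = u.reverse.take (n + 1) := by
  simpa [List.take_take] using congrArg (List.take (n + 1)) (h.1 hu)

theorem EndsLike.take_ne_of_isNested (h : EndsLike n u R) (hu : IsNestedOrInv n u)
    (ht : IsNested n t) (htu : t ≠ u.reverse) : R.reverse.take (n + 1) ≠ t.take (n + 1) := by
  obtain ⟨j', hj', B', hB', -, rfl⟩ := ht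
  rw [take_nest j' hB']
  rcases hu with hu | hu
  · rw [h.take_succ hu]
    obtain ⟨j, -, B, hB, -, rfl⟩ := hu
    rw [take_reverse_nest' j hB]
    intro heq
    have : (0 : Fin d) = j' := by simpa using congrArg List.getLast? heq
    exact hj' this.symm
  · rw [h.2 hu]
    obtain ⟨j, -, B, hB, -, hu⟩ := hu
    rw [hu, take_nest j hB]
    intro heq
    obtain ⟨hBB, hjj⟩ := List.append_inj' heq rfl
    obtain rfl : j = j' := by simpa using hjj
    have : B = B' := List.map_injective_iff.mpr (add_left_injective j) (by simpa using hBB)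
    exact htu (by rw [hu, this])

theorem EndsLike.take_ne_of_isNested_reverse (h : EndsLike n u R) (hu : IsNestedOrInv n u)
    (ht : IsNested n t.reverse) (htu : t ≠ u.reverse) :
    R.reverse.take (n + 2) ≠ t.take (n + 2) := by
  obtain ⟨j', hj', B', hB', -, ht⟩ := ht
  rw [← List.reverse_reverse t, ht] at htu ⊢
  rcases hu with hu | hu
  · rw [h.1 hu]
    obtain ⟨j, -, B, hB, -, rfl⟩ := hu
    rw [take_reverse_nest j hB, take_reverse_nest j' hB']
    intro heq
    obtain ⟨hBB, hjj⟩ := List.append_inj' heq rfl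
    obtain rfl : j = j' := by simpa using hjj
    exact htu (by rw [List.reverse_injective hBB])
  · have hR := h.2 hu
    obtain ⟨j, hj, B, hB, -, hu⟩ := hu
    rw [hu, take_nest j hB] at hR
    intro heq
    have := congrArg (List.take (n + 1)) heq
    rw [List.take_take, List.take_take, min_eq_left (by omega), hR,
      take_reverse_nest' j' hB'] at this
    exact hj (by simpa using congrArg List.getLast? this)

theorem EndsLike.reduceZ_append (h : EndsLike n u R) (hR : R.IsChain (· ≠ ·))
    (hu : IsNestedOrInv n u) (ht : IsNestedOrInv n t) (htu : t ≠ u.reverse) :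
    EndsLike n t (reduceZ (R ++ t)) := by
  have hlen := ht.length
  constructor
  · intro htn
    have := take_reverse_reduceZ_append hR ht.isChain (h.take_ne_of_isNested hu htn htu) le_rfl
    rwa [show t.length - n = n + 2 by omega] at this
  · intro htn
    have := take_reverse_reduceZ_append hR ht.isChain
      (h.take_ne_of_isNested_reverse hu htn htu) le_rfl
    rwa [show t.length - (n + 1) = n + 1 by omega] at this

theorem EndsLike.ne_nil (h : EndsLike n u R) (hu : IsNestedOrInv n u) : R ≠ [] := by
  rintro rfl
  have hlen := hu.length
  have hnil : u = [] := by
    rcases hu with hu | hu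
    · simpa using (h.1 hu).symm
    · simpa using (h.2 hu).symm
  simp [hnil] at hlen

end EndsLike

theorem endsLike_reduceZ_flatten {n : ℕ} (L : List (List (Fin d))) (hL : L ≠ [])
    (hgen : ∀ w ∈ L, IsNestedOrInv n w) (hred : L.IsChain fun u t => t ≠ u.reverse) :
    EndsLike n (L.getLast hL) (reduceZ L.flatten) := by
  induction L using List.reverseRecOn with
  | nil => exact absurd rfl hL
  | append_singleton L t ih =>
    have ht := hgen t (by simp)
    rw [List.getLast_append_singleton, List.flatten_append, List.flatten_singleton]
    rcases eq_or_ne L [] with rfl | hL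
    · rw [List.flatten_nil, List.nil_append, reduceZ_eq_self ht.isChain]
      exact ⟨fun _ => rfl, fun _ => rfl⟩
    · rw [← reduceZ_reduceZ_append]
      have hu := ih hL (fun w hw => hgen w (by simp [hw])) (hred.prefix (List.prefix_append _ _))
      refine hu.reduceZ_append (isChain_reduceZ _) (hgen _ (by simp)) ht ?_
      exact (List.isChain_append.mp hred).2.2 _ (List.getLast?_eq_some_getLast hL) t rfl

theorem isNested_ofFn {l : ℕ} {j : Fin d} (hj : j ≠ 0) {b : Fin (l + 1) → Fin d}
    (hb0 : b 0 = 0)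
    (hb : ∀ (i : ℕ) (h : i + 1 < l + 1), b ⟨i + 1, h⟩ ≠ b ⟨i, by omega⟩) :
    IsNested l (((List.ofFn b).map (· + j)).reverse ++ List.ofFn b) := by
  have hcons : List.ofFn b = 0 :: List.ofFn (fun i => b i.succ) := by rw [List.ofFn_succ, hb0]
  refine ⟨j, hj, _, List.length_ofFn, ?_, by rw [← hcons]; rfl⟩
  rw [← hcons, List.isChain_ofFn]
  exact fun i hi => (hb i hi).symm

end NestedPalindrome

open NestedPalindrome in
/-- In `ℤ/2 * ⋯ * ℤ/2` (`d` factors): with `φ_j` the index shift by `j` and `S₀` the set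
of nested words `φ_j(b_l)⋯φ_j(b_1) b_1⋯b_l` (with `b_1 = a_1`, `b_{i+1} ≠ b_i`,
`j ≠ 0`), any product `s₁⋯sₙ` of elements of `S₀ ∪ S₀⁻¹` with `s_{i+1} ≠ s_i⁻¹` has
reduced form ending with the last `l` (resp. `l+1`) letters of `sₙ` when
`sₙ ∈ S₀⁻¹` (resp. `sₙ ∈ S₀`); in particular `s₁⋯sₙ ≠ e` for `n ≥ 1`. -/
theorem nested_palindrome_products (d l n : ℕ) (hd : 3 ≤ d) (hl : 1 ≤ l) (hn : 1 ≤ n)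
    (S0 : Set (List (Fin d)))
    (hS0 : S0 = {w | ∃ j : Fin d, j ≠ ⟨0, by omega⟩ ∧ ∃ b : Fin l → Fin d,
      b ⟨0, by omega⟩ = ⟨0, by omega⟩ ∧
      (∀ (i : ℕ) (h : i + 1 < l), b ⟨i + 1, h⟩ ≠ b ⟨i, by omega⟩) ∧
      w = ((List.ofFn b).map (· + j)).reverse ++ List.ofFn b})
    (s : Fin n → List (Fin d))
    (hs : ∀ i, s i ∈ S0 ∪ {w | w.reverse ∈ S0})
    (hne : ∀ (i : ℕ) (h : i + 1 < n), s ⟨i + 1, h⟩ ≠ (s ⟨i, by omega⟩).reverse) :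
    (((s ⟨n - 1, by omega⟩).reverse ∈ S0 →
        (reduceZ ((List.ofFn s).flatten)).reverse.take l
          = (s ⟨n - 1, by omega⟩).reverse.take l)) ∧
    ((s ⟨n - 1, by omega⟩ ∈ S0 →
        (reduceZ ((List.ofFn s).flatten)).reverse.take (l + 1)
          = (s ⟨n - 1, by omega⟩).reverse.take (l + 1))) ∧
    reduceZ ((List.ofFn s).flatten) ≠ [] := by
  have : NeZero d := ⟨by omega⟩
  obtain ⟨l, rfl⟩ : ∃ m, l = m + 1 := ⟨l - 1, by omega⟩
  have hnest : ∀ w ∈ S0, IsNested l w := by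
    rw [hS0]
    rintro w ⟨j, hj, b, hb0, hb, rfl⟩
    exact isNested_ofFn hj hb0 hb
  have hL : List.ofFn s ≠ [] := by simp; omega
  have hlast : (List.ofFn s).getLast hL = s ⟨n - 1, by omega⟩ := by simp [List.getLast_ofFn]
  have hends := endsLike_reduceZ_flatten (List.ofFn s) hL
    (List.forall_mem_ofFn_iff.mpr fun i => (hs i).imp (hnest _) (hnest _))
    (List.isChain_ofFn.mpr fun i hi => hne i hi)
  rw [hlast] at hends
  exact ⟨fun h => hends.2 (hnest _ h), fun h => hends.1 (hnest _ h),
    hends.ne_nil ((hs _).imp (hnest _) (hnest _))⟩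
end

section
/- Let H be a subgroup of a countable group G, and equip [0,1]^H and [0,1]^G with the product of Lebesgue measures. Then there exists a measure-preserving H-equivariant measurable map [0,1]^H → [0,1]^G, where H acts on each space by (h·f)(x) = f(h^{-1}x). -/
/-!
Choosing a representative in each right coset of `H` identifies `G` with `H × H\G`, the action of
`H` by left multiplication becoming left multiplication on the first factor alone. Since
`H\G` is countable, `[0,1]^(H\G)` is standard Borel, so a single uniform variable can be turned
into a family of independent uniform variables indexed by `H\G`: there is a measurable
`ψ : [0,1] → [0,1]^(H\G)` pushing Lebesgue measure to the product measure. Then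
`F f (h, c) := ψ (f h) c` is equivariant and pushes the product measure forward to the product
measure.
-/

open MeasureTheory

/-- `μ` is the product over `ι` of uniform measures on `[0,1]`: it is a probability
measure whose values on measurable cylinders are the corresponding products of
Lebesgue measures of the factors intersected with `[0,1]`. -/
def IsUnifProd {ι : Type*} (μ : Measure (ι → ℝ)) : Prop :=
  IsProbabilityMeasure μ ∧
    ∀ (s : Finset ι) (t : ι → Set ℝ), (∀ i, MeasurableSet (t i)) →
      μ {f | ∀ i ∈ s, f i ∈ t i}
        = ∏ i ∈ s, (volume.restrict (Set.Icc (0 : ℝ) 1)) (t i)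

open Set Measure

instance : IsProbabilityMeasure (volume.restrict (Icc (0 : ℝ) 1)) :=
  ⟨by simp⟩

lemma IsUnifProd.eq_infinitePi {ι : Type*} {μ : Measure (ι → ℝ)} (hμ : IsUnifProd μ) :
    μ = infinitePi fun _ : ι ↦ volume.restrict (Icc (0 : ℝ) 1) :=
  Measure.eq_infinitePi _ fun s t ht ↦ hμ.2 s t ht

lemma measurePreserving_projIcc_zero_one :
    MeasurePreserving (projIcc (0 : ℝ) 1 zero_le_one) (volume.restrict (Icc 0 1)) volume where
  measurable := continuous_projIcc.measurable
  map_eq := by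
    rw [← unitInterval.measurePreserving_coe.map_eq,
      Measure.map_map continuous_projIcc.measurable measurable_subtype_coe]
    simp [Function.comp_def]

lemma exists_measurePreserving_Icc_zero_one {Y : Type*} [MeasurableSpace Y]
    [StandardBorelSpace Y] [Nonempty Y] (ν : Measure Y) [IsProbabilityMeasure ν] :
    ∃ ψ : ℝ → Y, MeasurePreserving ψ (volume.restrict (Icc 0 1)) ν := by
  obtain ⟨f, hf, hfν⟩ := ν.exists_measurable_map_eq
  exact ⟨f ∘ projIcc 0 1 zero_le_one,
    MeasurePreserving.comp ⟨hf, hfν⟩ measurePreserving_projIcc_zero_one⟩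

lemma MeasureTheory.MeasurePreserving.infinitePi_uncurry_equiv {ι κ α X : Type*}
    [MeasurableSpace X] {μ : Measure X} [IsProbabilityMeasure μ] {ψ : X → κ → X}
    (hψ : MeasurePreserving ψ μ (infinitePi fun _ ↦ μ)) (e : α ≃ ι × κ) :
    MeasurePreserving (fun (f : ι → X) a ↦ ψ (f (e a).1) (e a).2)
      (infinitePi fun _ ↦ μ) (infinitePi fun _ ↦ μ) := by
  have spread : MeasurePreserving (fun (f : ι → X) i ↦ ψ (f i))
      (infinitePi fun _ ↦ μ) (infinitePi fun _ ↦ infinitePi fun _ : κ ↦ μ) :=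
    ⟨measurable_pi_lambda _ fun i ↦ hψ.measurable.comp (measurable_pi_apply i),
      by rw [infinitePi_map_pi _ fun _ ↦ hψ.measurable, hψ.map_eq]⟩
  have uncurry : MeasurePreserving (MeasurableEquiv.curry ι κ X).symm
      (infinitePi fun _ ↦ infinitePi fun _ ↦ μ) (infinitePi fun _ ↦ μ) :=
    ⟨by fun_prop, infinitePi_map_curry_symm fun _ _ ↦ μ⟩
  have reindex : MeasurePreserving (MeasurableEquiv.piCongrLeft (fun _ ↦ X) e.symm)
      (infinitePi fun _ ↦ μ) (infinitePi fun _ ↦ μ) :=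
    ⟨by fun_prop, infinitePi_map_piCongrLeft (fun _ ↦ μ) e.symm⟩
  convert reindex.comp (uncurry.comp spread) using 1
  ext f a
  simp [MeasurableEquiv.piCongrLeft, Equiv.piCongrLeft_apply_eq_cast, Function.uncurry_def]

namespace Subgroup

variable {G : Type*} [Group G] (H : Subgroup G)

noncomputable def equivProdQuotientRightRel : G ≃ H × Quotient (QuotientGroup.rightRel H) where
  toFun g := (⟨g * (⟦g⟧ : Quotient (QuotientGroup.rightRel H)).out⁻¹,
    QuotientGroup.rightRel_apply.mp (Quotient.mk_out g)⟩, ⟦g⟧)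
  invFun p := p.1 * p.2.out
  left_inv g := by simp
  right_inv := by
    rintro ⟨h, q⟩
    have hq : (⟦h * q.out⟧ : Quotient (QuotientGroup.rightRel H)) = q := by
      conv_rhs => rw [← q.out_eq]
      exact Quotient.sound (QuotientGroup.rightRel_apply.mpr (by simp))
    ext <;> simp [hq]

lemma equivProdQuotientRightRel_mul (h : H) (g : G) :
    H.equivProdQuotientRightRel (h * g) =
      (h * (H.equivProdQuotientRightRel g).1, (H.equivProdQuotientRightRel g).2) := by
  have hq : (⟦h * g⟧ : Quotient (QuotientGroup.rightRel H)) = ⟦g⟧ :=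
    Quotient.sound (QuotientGroup.rightRel_apply.mpr (by simp))
  ext <;> simp [equivProdQuotientRightRel, hq, mul_assoc]

end Subgroup

/-- For a subgroup `H` of a countable group `G`, there is a measure-preserving
`H`-equivariant map `[0,1]^H → [0,1]^G`, where `H` acts by `(h·f)(x) = f(h⁻¹x)`. -/
theorem exists_equivariant_measure_preserving (G : Type*) [Group G] [Countable G]
    (H : Subgroup G) (μH : Measure (↥H → ℝ)) (μG : Measure (G → ℝ))
    (hμH : IsUnifProd μH) (hμG : IsUnifProd μG) :
    ∃ F : (↥H → ℝ) → (G → ℝ), Measurable F ∧ μH.map F = μG ∧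
      ∀ (h : ↥H) (f : ↥H → ℝ),
        F (fun x => f (h⁻¹ * x)) = fun g => F f ((h : G)⁻¹ * g) := by
  obtain ⟨ψ, hψ⟩ := exists_measurePreserving_Icc_zero_one
    (infinitePi fun _ : Quotient (QuotientGroup.rightRel H) ↦ volume.restrict (Icc (0 : ℝ) 1))
  have hF := hψ.infinitePi_uncurry_equiv H.equivProdQuotientRightRel
  refine ⟨_, hF.measurable, ?_, fun h f ↦ ?_⟩
  · rw [hμH.eq_infinitePi, hμG.eq_infinitePi]
    exact hF.map_eq
  · funext g
    dsimp only
    rw [← InvMemClass.coe_inv, Subgroup.equivProdQuotientRightRel_mul]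
end

section
/- Let d ≥ 3 and consider the d-regular tree T_d. For vertices u, v at distance k and radius R, the quantity |B_R(u) ∩ B_R(v)| / |B_R(v)| converges as R → ∞ to 2/(d(d-1)^l) if k = 2l+1 is odd, and to 1/(d-1)^l if k = 2l is even. -/
/-!
Let `u = x₀, x₁, …, x_k = v` be the geodesic. For `k ≥ 2`, a vertex lies in
`B_{R+1}(u) ∩ B_{R+1}(v)` iff it lies in `B_R(x₁) ∩ B_R(x_{k-1})`: if stepping from `u` to `x₁`
moves away from `w`, then `u` lies on the geodesic from `w` to `v`, so `d(w, v) ≥ d(w, u) + 2`.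
Peeling off `⌊k/2⌋` such layers leaves either a single ball or the two balls around an edge
`u' ~ v'`, where `B_{R+1}(u') ∩ B_{R+1}(v') = B_R(u') ∪ B_R(v')` and inclusion–exclusion gives
`(d-2)|B_R(u') ∩ B_R(v')| = 2(d-1)^R - 2`. Since `(d-2)|B_R| = d(d-1)^R - 2`, the ratio is a
quotient of two explicit exponentials in `R`.
-/

open Filter Topology

theorem tendsto_mul_pow_sub_div_mul_pow_sub {q a b c e : ℝ} (hq : 1 < q) (hc : c ≠ 0) :
    Tendsto (fun n : ℕ => (a * q ^ n - b) / (c * q ^ n - e)) atTop (𝓝 (a / c)) := by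
  have hlim : Tendsto (fun n : ℕ => (q ^ n)⁻¹) atTop (𝓝 0) :=
    tendsto_inv_atTop_zero.comp (tendsto_pow_atTop_atTop_of_one_lt hq)
  have hquot := ((tendsto_const_nhds (x := a)).sub (hlim.const_mul b)).div
    ((tendsto_const_nhds (x := c)).sub (hlim.const_mul e)) (by simpa using hc)
  simp only [mul_zero, sub_zero] at hquot
  refine hquot.congr fun n => ?_
  have : q ^ n ≠ 0 := by positivity
  simp only [Pi.div_apply]
  field_simp

namespace SimpleGraph

variable {V : Type*}

def closedBall (G : SimpleGraph V) (c : V) (r : ℕ) : Set V := {w | G.dist w c ≤ r}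

def sphere (G : SimpleGraph V) (c : V) (r : ℕ) : Set V := {w | G.dist w c = r}

variable {G : SimpleGraph V}

theorem exists_adj_dist_add_one_eq {c x : V} (h : G.dist c x ≠ 0) :
    ∃ y, G.Adj x y ∧ G.dist c y + 1 = G.dist c x := by
  rw [dist_comm] at h ⊢
  obtain ⟨p, hp⟩ := exists_walk_of_dist_ne_zero h
  have hnil : ¬p.Nil := by rw [← Walk.length_eq_zero_iff]; omega
  refine ⟨p.snd, p.adj_snd hnil, ?_⟩
  rw [dist_comm]
  refine le_antisymm ?_ ?_
  · have hle := dist_le p.tail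
    have hlen := p.length_tail_add_one hnil
    omega
  · have htri := (p.adj_snd hnil).reachable.dist_triangle_left c
    rw [dist_eq_one_iff_adj.mpr (p.adj_snd hnil)] at htri
    omega

theorem sphere_succ_eq_biUnion (c : V) (t : ℕ) :
    G.sphere c (t + 1) = ⋃ y ∈ G.sphere c t, {z | G.Adj y z ∧ G.dist z c = t + 1} := by
  ext z
  simp only [sphere, Set.mem_iUnion, Set.mem_ofPred_eq, exists_prop]
  refine ⟨fun hz => ?_, fun ⟨_, _, _, hz⟩ => hz⟩
  obtain ⟨y, hzy, hcy⟩ := exists_adj_dist_add_one_eq (G := G) (c := c) (x := z)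
    (by rw [dist_comm]; omega)
  have hzc : G.dist z c = G.dist c z := dist_comm
  exact ⟨y, by rw [dist_comm]; omega, hzy.symm, hz⟩

theorem sphere_one (c : V) : G.sphere c 1 = G.neighborSet c := by
  ext
  simp [sphere, adj_comm]

theorem closedBall_succ (c : V) (R : ℕ) :
    G.closedBall c (R + 1) = G.closedBall c R ∪ G.sphere c (R + 1) := by
  ext
  simp only [closedBall, sphere, Set.mem_union, Set.mem_ofPred_eq]
  omega

theorem disjoint_closedBall_sphere_succ (c : V) (R : ℕ) :
    Disjoint (G.closedBall c R) (G.sphere c (R + 1)) :=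
  Set.disjoint_left.mpr fun _ hR hS => by
    simp only [closedBall, sphere, Set.mem_ofPred_eq] at hR hS
    omega

namespace Connected

theorem sphere_zero (hG : G.Connected) (c : V) : G.sphere c 0 = {c} := by
  ext
  simp [sphere, hG.dist_eq_zero_iff]

theorem closedBall_zero (hG : G.Connected) (c : V) : G.closedBall c 0 = {c} := by
  ext
  simp [closedBall, hG.dist_eq_zero_iff]

theorem finite_sphere (hG : G.Connected) (hfin : ∀ x, (G.neighborSet x).Finite) (c : V)
    (t : ℕ) : (G.sphere c t).Finite := by
  induction t with
  | zero => simp [hG.sphere_zero]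
  | succ t ih =>
    rw [sphere_succ_eq_biUnion]
    exact ih.biUnion fun y _ => (hfin y).subset fun _ hz => hz.1

theorem finite_closedBall (hG : G.Connected) (hfin : ∀ x, (G.neighborSet x).Finite) (c : V)
    (R : ℕ) : (G.closedBall c R).Finite := by
  induction R with
  | zero => simp [hG.closedBall_zero]
  | succ R ih => rw [closedBall_succ]; exact ih.union (hG.finite_sphere hfin c _)

end Connected

namespace IsTree

theorem eq_of_adj_of_dist_add_one_eq (hG : G.IsTree) {c x a b : V} (ha : G.Adj x a)
    (hb : G.Adj x b) (hca : G.dist c a + 1 = G.dist c x) (hcb : G.dist c b + 1 = G.dist c x) :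
    a = b := by
  rw [dist_comm, dist_comm (u := c)] at hca hcb
  obtain ⟨p, hp, hpl⟩ := hG.connected.exists_path_of_dist a c
  obtain ⟨q, hq, hql⟩ := hG.connected.exists_path_of_dist b c
  have hpx := (Walk.cons ha p).isPath_of_length_eq_dist (by simp [hpl, hca])
  have hqx := (Walk.cons hb q).isPath_of_length_eq_dist (by simp [hql, hcb])
  simpa using congrArg (fun r : G.Path x c => r.1.getVert 1)
    ((hG.isAcyclic.subsingleton_path x c).elim ⟨_, hpx⟩ ⟨_, hqx⟩)

theorem dist_eq_add_of_adj_of_dist_add_one_eq (hG : G.IsTree) {u u' v w : V}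
    (hu : G.Adj u u') (hu' : G.dist v u' + 1 = G.dist v u)
    (hw : G.dist w u' = G.dist w u + 1) : G.dist w v = G.dist w u + G.dist u v := by
  induction h : G.dist v u' generalizing u u' with
  | zero =>
    obtain rfl := hG.connected.dist_eq_zero_iff.mp h
    rw [dist_self, zero_add] at hu'
    rw [dist_comm (u := u), ← hu', hw]
  | succ m ih =>
    obtain ⟨u'', hu'', hu''v⟩ := exists_adj_dist_add_one_eq (by omega : G.dist v u' ≠ 0)
    have hwu'' : G.dist w u'' = G.dist w u' + 1 := by
      refine (hG.dist_eq_dist_add_one_of_adj w hu'').resolve_left fun h' => ?_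
      obtain rfl := hG.eq_of_adj_of_dist_add_one_eq hu'' hu.symm h'.symm hw.symm
      omega
    have hwv := ih hu'' hu''v hwu'' (by omega)
    have hu'v : G.dist u' v = G.dist v u' := dist_comm
    have huv : G.dist u v = G.dist v u := dist_comm
    omega

theorem mem_closedBall_of_mem_closedBall_inter (hG : G.IsTree) {u u' v w : V} {R : ℕ}
    (hu : G.Adj u u') (hu' : G.dist v u' + 1 = G.dist v u) (huv : 2 ≤ G.dist u v)
    (hw : w ∈ G.closedBall u (R + 1) ∩ G.closedBall v (R + 1)) : w ∈ G.closedBall u' R := by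
  obtain ⟨hwu, hwv⟩ : G.dist w u ≤ R + 1 ∧ G.dist w v ≤ R + 1 := hw
  show G.dist w u' ≤ R
  rcases hG.dist_eq_dist_add_one_of_adj w hu with h | h
  · omega
  · have hwv' := hG.dist_eq_add_of_adj_of_dist_add_one_eq hu hu' h
    omega

theorem closedBall_inter_closedBall_succ (hG : G.IsTree) {u u' v v' : V} (R : ℕ)
    (hu : G.Adj u u') (hv : G.Adj v v') (hu' : G.dist v u' + 1 = G.dist v u)
    (hv' : G.dist u v' + 1 = G.dist u v) (huv : 2 ≤ G.dist u v) :
    G.closedBall u (R + 1) ∩ G.closedBall v (R + 1) =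
      G.closedBall u' R ∩ G.closedBall v' R := by
  ext w
  refine ⟨fun hw => ⟨hG.mem_closedBall_of_mem_closedBall_inter hu hu' huv hw,
    hG.mem_closedBall_of_mem_closedBall_inter hv hv' (dist_comm (u := u) ▸ huv) hw.symm⟩,
    fun ⟨hwu', hwv'⟩ => ⟨?_, ?_⟩⟩
  · have htri := hG.connected.dist_triangle (u := w) (v := u') (w := u)
    rw [dist_eq_one_iff_adj.mpr hu.symm] at htri
    exact htri.trans (Nat.succ_le_succ hwu')
  · have htri := hG.connected.dist_triangle (u := w) (v := v') (w := v)
    rw [dist_eq_one_iff_adj.mpr hv.symm] at htri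
    exact htri.trans (Nat.succ_le_succ hwv')

theorem exists_closedBall_inter_closedBall_add_eq (hG : G.IsTree) (l r : ℕ) {u v : V}
    (huv : G.dist u v = 2 * l + r) :
    ∃ u' v', G.dist u' v' = r ∧ ∀ R,
      G.closedBall u (R + l) ∩ G.closedBall v (R + l) = G.closedBall u' R ∩ G.closedBall v' R := by
  induction l generalizing u v with
  | zero => exact ⟨u, v, by simpa using huv, fun R => rfl⟩
  | succ l ih =>
    have hvu : G.dist v u = G.dist u v := dist_comm
    obtain ⟨u₁, hu₁, hvu₁⟩ := exists_adj_dist_add_one_eq (G := G) (c := v) (x := u) (by omega)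
    have hu₁v : G.dist u₁ v = G.dist v u₁ := dist_comm
    obtain ⟨v₁, hv₁, hu₁v₁⟩ := exists_adj_dist_add_one_eq (G := G) (c := u₁) (x := v) (by omega)
    have huv₁ : G.dist u v₁ + 1 = G.dist u v := by
      have h₁ := hG.connected.dist_triangle (u := u) (v := u₁) (w := v₁)
      have h₂ := hG.connected.dist_triangle (u := u) (v := v₁) (w := v)
      rw [dist_eq_one_iff_adj.mpr hu₁] at h₁
      rw [dist_eq_one_iff_adj.mpr hv₁.symm] at h₂
      omega
    obtain ⟨u', v', hu'v', hball⟩ := ih (u := u₁) (v := v₁) (by omega)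
    refine ⟨u', v', hu'v', fun R => ?_⟩
    rw [← hball, ← add_assoc]
    exact hG.closedBall_inter_closedBall_succ _ hu₁ hv₁ hvu₁ huv₁ (by omega)

theorem closedBall_inter_closedBall_succ_of_adj (hG : G.IsTree) {u v : V} (huv : G.Adj u v)
    (R : ℕ) :
    G.closedBall u (R + 1) ∩ G.closedBall v (R + 1) = G.closedBall u R ∪ G.closedBall v R := by
  ext w
  simp only [closedBall, Set.mem_inter_iff, Set.mem_union, Set.mem_ofPred_eq]
  have hstep := hG.dist_eq_dist_add_one_of_adj w huv
  omega

variable {d : ℕ}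

theorem ncard_setOf_adj_dist_eq_add_one (hG : G.IsTree) (hreg : ∀ x, (G.neighborSet x).ncard = d) {c y : V}
    {t : ℕ} (ht : t ≠ 0) (hy : G.dist y c = t) :
    {z | G.Adj y z ∧ G.dist z c = t + 1}.ncard = d - 1 := by
  have hyc : G.dist c y = t := dist_comm.trans hy
  obtain ⟨p, hyp, hcp⟩ := exists_adj_dist_add_one_eq (G := G) (c := c) (x := y) (by omega)
  have hchildren : {z | G.Adj y z ∧ G.dist z c = t + 1} = G.neighborSet y \ {p} := by
    ext z
    simp only [Set.mem_ofPred_eq, Set.mem_sdiff, Set.mem_singleton_iff, mem_neighborSet]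
    refine ⟨fun ⟨hyz, hzc⟩ => ⟨hyz, ?_⟩, fun ⟨hyz, hzp⟩ => ⟨hyz, ?_⟩⟩
    · rintro rfl
      rw [dist_comm] at hzc
      omega
    · rcases hG.dist_eq_dist_add_one_of_adj c hyz with h | h
      · exact absurd (hG.eq_of_adj_of_dist_add_one_eq hyz hyp h.symm hcp) hzp
      · rw [dist_comm]
        omega
  rw [hchildren, Set.ncard_sdiff_singleton_of_mem (s := G.neighborSet y) hyp, hreg]

theorem ncard_sphere_succ (hG : G.IsTree) (hreg : ∀ x, (G.neighborSet x).ncard = d)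
    (hd : d ≠ 0) (c : V) (t : ℕ) : (G.sphere c (t + 1)).ncard = d * (d - 1) ^ t := by
  have hfin (x : V) : (G.neighborSet x).Finite :=
    Set.finite_of_ncard_ne_zero (by rw [hreg]; exact hd)
  induction t with
  | zero => rw [sphere_one, hreg, pow_zero, mul_one]
  | succ t ih =>
    have hdisj : (G.sphere c (t + 1)).PairwiseDisjoint
        fun y => {z | G.Adj y z ∧ G.dist z c = t + 1 + 1} := by
      intro y hy y' hy' hne
      refine Set.disjoint_left.mpr fun z ⟨hyz, hzc⟩ ⟨hy'z, _⟩ => hne ?_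
      simp only [sphere, Set.mem_ofPred_eq] at hy hy'
      exact hG.eq_of_adj_of_dist_add_one_eq hyz.symm hy'z.symm
        (by rw [dist_comm, hy, dist_comm, hzc]) (by rw [dist_comm, hy', dist_comm, hzc])
    have hchildren : ∀ y ∈ G.sphere c (t + 1),
        {z | G.Adj y z ∧ G.dist z c = t + 1 + 1}.ncard = (d - 1) * 1 := fun y hy =>
      (hG.ncard_setOf_adj_dist_eq_add_one hreg t.succ_ne_zero hy).trans (mul_one _).symm
    rw [sphere_succ_eq_biUnion, (hG.connected.finite_sphere hfin c _).ncard_biUnion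
      (fun y _ => (hfin y).subset fun _ hz => hz.1) hdisj, finsum_mem_congr rfl hchildren,
      ← mul_finsum_mem, finsum_one, ih]
    ring

theorem ncard_closedBall (hG : G.IsTree) (hreg : ∀ x, (G.neighborSet x).ncard = d)
    (hd : d ≠ 0) (c : V) (R : ℕ) :
    ((d : ℝ) - 2) * (G.closedBall c R).ncard = d * ((d : ℝ) - 1) ^ R - 2 := by
  have hfin (x : V) : (G.neighborSet x).Finite :=
    Set.finite_of_ncard_ne_zero (by rw [hreg]; exact hd)
  induction R with
  | zero =>
    rw [hG.connected.closedBall_zero, Set.ncard_singleton]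
    ring
  | succ R ih =>
    rw [closedBall_succ, Set.ncard_union_eq (disjoint_closedBall_sphere_succ c R)
      (hG.connected.finite_closedBall hfin c R) (hG.connected.finite_sphere hfin c _),
      hG.ncard_sphere_succ hreg hd]
    push_cast [Nat.cast_sub (Nat.one_le_iff_ne_zero.mpr hd)]
    linear_combination ih

theorem ncard_closedBall_inter_closedBall_of_adj (hG : G.IsTree)
    (hreg : ∀ x, (G.neighborSet x).ncard = d) (hd : d ≠ 0) {u v : V} (huv : G.Adj u v)
    (R : ℕ) :
    ((d : ℝ) - 2) * (G.closedBall u R ∩ G.closedBall v R).ncard = 2 * ((d : ℝ) - 1) ^ R - 2 := by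
  have hfin (x : V) : (G.neighborSet x).Finite :=
    Set.finite_of_ncard_ne_zero (by rw [hreg]; exact hd)
  induction R with
  | zero =>
    rw [hG.connected.closedBall_zero, hG.connected.closedBall_zero,
      (Set.singleton_inter_eq_empty (s := {v})).mpr huv.ne, Set.ncard_empty]
    ring
  | succ R ih =>
    have hunion : ((G.closedBall u R ∪ G.closedBall v R).ncard : ℝ) +
        (G.closedBall u R ∩ G.closedBall v R).ncard =
          (G.closedBall u R).ncard + (G.closedBall v R).ncard := by
      exact_mod_cast Set.ncard_union_add_ncard_inter _ _
        (hG.connected.finite_closedBall hfin u R) (hG.connected.finite_closedBall hfin v R)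
    rw [hG.closedBall_inter_closedBall_succ_of_adj huv]
    linear_combination ((d : ℝ) - 2) * hunion + hG.ncard_closedBall hreg hd u R +
      hG.ncard_closedBall hreg hd v R - ih

theorem tendsto_ncard_div_ncard_closedBall_add (hG : G.IsTree)
    (hreg : ∀ x, (G.neighborSet x).ncard = d) (hd : 3 ≤ d) {X : ℕ → Set V} {a b : ℝ}
    (hX : ∀ R, ((d : ℝ) - 2) * (X R).ncard = a * ((d : ℝ) - 1) ^ R - b) (c : V) (l : ℕ) :
    Tendsto (fun R => ((X R).ncard : ℝ) / (G.closedBall c (R + l)).ncard) atTop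
      (𝓝 (a / (d * ((d : ℝ) - 1) ^ l))) := by
  have hd' : (3 : ℝ) ≤ d := by exact_mod_cast hd
  refine (tendsto_mul_pow_sub_div_mul_pow_sub (b := b) (e := 2) (by linarith : (1 : ℝ) < d - 1)
    (mul_ne_zero (by positivity) (pow_ne_zero _ (by linarith)))).congr fun R => ?_
  rw [← mul_div_mul_left ((X R).ncard : ℝ) _ (by linarith : (d : ℝ) - 2 ≠ 0), hX,
    hG.ncard_closedBall hreg (by omega), pow_add]
  ring

end IsTree
end SimpleGraph

open SimpleGraph

/-- On the `d`-regular tree (`d ≥ 3`), for vertices `u, v` at distance `k`, the ratio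
`|B_R(u) ∩ B_R(v)| / |B_R(v)|` converges as `R → ∞` to `2/(d(d-1)^l)` if `k = 2l+1`
is odd, and to `1/(d-1)^l` if `k = 2l` is even. -/
theorem ball_intersection_ratio_tendsto {V : Type*} (G : SimpleGraph V) (d k : ℕ)
    (hd : 3 ≤ d) (hconn : G.Connected) (hacyclic : G.IsAcyclic)
    (hreg : ∀ x : V, (G.neighborSet x).ncard = d)
    (u v : V) (hdist : G.dist u v = k) :
    Tendsto
      (fun R : ℕ =>
        (({w : V | G.dist w u ≤ R} ∩ {w : V | G.dist w v ≤ R}).ncard : ℝ)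
          / ({w : V | G.dist w v ≤ R}).ncard)
      atTop
      (nhds (if Odd k then 2 / ((d : ℝ) * ((d : ℝ) - 1) ^ (k / 2))
        else 1 / ((d : ℝ) - 1) ^ (k / 2))) := by
  have hG : G.IsTree := ⟨hconn, hacyclic⟩
  obtain ⟨u', v', hu'v', hball⟩ :=
    hG.exists_closedBall_inter_closedBall_add_eq (k / 2) (k % 2) (u := u) (v := v) (by omega)
  refine (tendsto_add_atTop_iff_nat (k / 2)).mp ?_
  change Tendsto (fun R => ((G.closedBall u (R + k / 2) ∩ G.closedBall v (R + k / 2)).ncard : ℝ)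
    / (G.closedBall v (R + k / 2)).ncard) atTop _
  simp_rw [hball]
  rcases Nat.even_or_odd k with hk | hk
  · obtain rfl : u' = v' := hconn.dist_eq_zero_iff.mp (by rw [hu'v', Nat.even_iff.mp hk])
    have hlim := hG.tendsto_ncard_div_ncard_closedBall_add hreg hd
      (hG.ncard_closedBall hreg (by omega) u') v (k / 2)
    simp only [Set.inter_self]
    rwa [if_neg (Nat.not_odd_iff_even.mpr hk), one_div,
      ← div_mul_cancel_left₀ (by positivity : (d : ℝ) ≠ 0)]
  · have hadj : G.Adj u' v' := dist_eq_one_iff_adj.mp (by rw [hu'v', Nat.odd_iff.mp hk])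
    rw [if_pos hk]
    exact hG.tendsto_ncard_div_ncard_closedBall_add hreg hd
      (hG.ncard_closedBall_inter_closedBall_of_adj hreg (by omega) hadj) v (k / 2)
end
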